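/- arXiv:2403.08521 — 9 statements merged into one kernel-verified Lean document; each statement's English description precedes it below -/
import Mathlib

section
/- In the quantized enveloping algebra U_q(sl_2) with generators E, F, K, K^{-1}, the elements X = E, Z = q^{-2}EF - FE, Y = KF span a 3-dimensional subspace that is closed under the left adjoint action ad_x(y) = Σ x_{(1)} y S(x_{(2)}). -/
noncomputable section

open FreeAlgebra

/-- Generators E = ι 0, F = ι 1, K = ι 2, K⁻¹ = ι 3. -/
inductive UqRel (q : ℂ) : FreeAlgebra ℂ (Fin 4) → FreeAlgebra ℂ (Fin 4) → Prop
  | rKE : UqRel q (ι ℂ 2 * ι ℂ 0) ((q ^ 2 : ℂ) • (ι ℂ 0 * ι ℂ 2))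
  | rKF : UqRel q (ι ℂ 2 * ι ℂ 1) (((q ^ 2)⁻¹ : ℂ) • (ι ℂ 1 * ι ℂ 2))
  | rKK' : UqRel q (ι ℂ 2 * ι ℂ 3) 1
  | rK'K : UqRel q (ι ℂ 3 * ι ℂ 2) 1
  | rEF : UqRel q (ι ℂ 0 * ι ℂ 1 - ι ℂ 1 * ι ℂ 0)
      (((q - q⁻¹)⁻¹ : ℂ) • (ι ℂ 2 - ι ℂ 3))

abbrev Uq (q : ℂ) := RingQuot (UqRel q)

def uE (q : ℂ) : Uq q := RingQuot.mkAlgHom ℂ (UqRel q) (ι ℂ 0)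
def uF (q : ℂ) : Uq q := RingQuot.mkAlgHom ℂ (UqRel q) (ι ℂ 1)
def uK (q : ℂ) : Uq q := RingQuot.mkAlgHom ℂ (UqRel q) (ι ℂ 2)
def uKi (q : ℂ) : Uq q := RingQuot.mkAlgHom ℂ (UqRel q) (ι ℂ 3)

def uX (q : ℂ) : Uq q := uE q
def uZ (q : ℂ) : Uq q := (q ^ 2)⁻¹ • (uE q * uF q) - uF q * uE q
def uY (q : ℂ) : Uq q := uK q * uF q

/-- ad_E(y) = Σ E_{(1)} y S(E_{(2)}), using ΔE = E⊗K + 1⊗E, S(K) = K⁻¹, S(E) = -EK⁻¹. -/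
def adE (q : ℂ) (y : Uq q) : Uq q := uE q * y * uKi q - y * (uE q * uKi q)

/-- ad_F(y) = Σ F_{(1)} y S(F_{(2)}), using ΔF = F⊗1 + K⁻¹⊗F, S(F) = -KF. -/
def adF (q : ℂ) (y : Uq q) : Uq q := uF q * y - uKi q * y * (uK q * uF q)

def adK (q : ℂ) (y : Uq q) : Uq q := uK q * y * uKi q

def adKi (q : ℂ) (y : Uq q) : Uq q := uKi q * y * uK q

/-! X, Z, Y are eigenvectors of conjugation by K, with eigenvalues q², 1, q⁻², which
settles ad_K and ad_{K⁻¹}. Since ad_E y = (E y - y E) K⁻¹ and ad_F y = F y - (K⁻¹ y K) F,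
the relations give ad_E : Y ↦ Z ↦ -(q + q⁻¹) X ↦ 0 and ad_F : X ↦ -Z ↦ -(q + q⁻¹) Y ↦ 0.
Linear independence is read off the two-dimensional representation E ↦ e₁₂, F ↦ e₂₁,
K ↦ diag(q, q⁻¹), in which X, Z, Y have disjoint supports. -/

theorem IsLinearMap.apply_mem_span {R M : Type*} [Semiring R] [AddCommMonoid M] [Module R M]
    {f : M → M} (hf : IsLinearMap R f) {s : Set M} (hs : ∀ x ∈ s, f x ∈ Submodule.span R s)
    {y : M} (hy : y ∈ Submodule.span R s) : f y ∈ Submodule.span R s :=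
  (Submodule.map_span_le (hf.mk' f) s _).mpr hs ⟨y, hy, rfl⟩

variable {q : ℂ}

theorem uK_mul_uE : uK q * uE q = q ^ 2 • (uE q * uK q) := by
  simpa [uK, uE] using RingQuot.mkAlgHom_rel ℂ (UqRel.rKE (q := q))

theorem uK_mul_uF : uK q * uF q = (q ^ 2)⁻¹ • (uF q * uK q) := by
  simpa [uK, uF] using RingQuot.mkAlgHom_rel ℂ (UqRel.rKF (q := q))

theorem uK_mul_uKi : uK q * uKi q = 1 := by
  simpa [uK, uKi] using RingQuot.mkAlgHom_rel ℂ (UqRel.rKK' (q := q))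

theorem uKi_mul_uK : uKi q * uK q = 1 := by
  simpa [uK, uKi] using RingQuot.mkAlgHom_rel ℂ (UqRel.rK'K (q := q))

theorem uE_mul_uF_sub_uF_mul_uE :
    uE q * uF q - uF q * uE q = (q - q⁻¹)⁻¹ • (uK q - uKi q) := by
  simpa [uE, uF, uK, uKi] using RingQuot.mkAlgHom_rel ℂ (UqRel.rEF (q := q))

def IsKWeight (c : ℂ) (y : Uq q) : Prop := uK q * y = c • (y * uK q)

theorem isKWeight_uE : IsKWeight (q ^ 2) (uE q) := uK_mul_uE

theorem isKWeight_uF : IsKWeight (q ^ 2)⁻¹ (uF q) := uK_mul_uF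

theorem isKWeight_uK : IsKWeight 1 (uK q) := by simp [IsKWeight]

namespace IsKWeight

variable {c d : ℂ} {x y : Uq q}

theorem mul (hx : IsKWeight c x) (hy : IsKWeight d y) : IsKWeight (c * d) (x * y) := by
  rw [IsKWeight, ← mul_assoc, hx, smul_mul_assoc, mul_assoc, hy, mul_smul_comm, smul_smul,
    mul_assoc]

theorem smul (a : ℂ) (hx : IsKWeight c x) : IsKWeight c (a • x) := by
  rw [IsKWeight, mul_smul_comm, hx, smul_mul_assoc, smul_comm]

theorem sub (hx : IsKWeight c x) (hy : IsKWeight c y) : IsKWeight c (x - y) := by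
  rw [IsKWeight, mul_sub, hx, hy, sub_mul, smul_sub]

theorem mul_uK (hc : c ≠ 0) (hx : IsKWeight c x) : x * uK q = c⁻¹ • (uK q * x) := by
  rw [hx, inv_smul_smul₀ hc]

theorem adK_eq (hx : IsKWeight c x) : adK q x = c • x := by
  rw [adK, hx, smul_mul_assoc, mul_assoc, uK_mul_uKi, mul_one]

theorem adKi_eq (hc : c ≠ 0) (hx : IsKWeight c x) : adKi q x = c⁻¹ • x := by
  rw [adKi, mul_assoc, hx.mul_uK hc, mul_smul_comm, ← mul_assoc, uKi_mul_uK, one_mul]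

theorem uKi_mul (hc : c ≠ 0) (hx : IsKWeight c x) : uKi q * x = c⁻¹ • (x * uKi q) := by
  calc uKi q * x = adKi q x * uKi q := by rw [adKi, mul_assoc _ (uK q), uK_mul_uKi, mul_one]
    _ = c⁻¹ • (x * uKi q) := by rw [hx.adKi_eq hc, smul_mul_assoc]

end IsKWeight

theorem isKWeight_uZ (hq : q ≠ 0) : IsKWeight 1 (uZ q) := by
  have hEF : IsKWeight 1 (uE q * uF q) := by
    simpa [hq] using isKWeight_uE.mul (isKWeight_uF (q := q))
  have hFE : IsKWeight 1 (uF q * uE q) := by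
    simpa [hq] using isKWeight_uF.mul (isKWeight_uE (q := q))
  exact (hEF.smul _).sub hFE

theorem isKWeight_uY : IsKWeight (q ^ 2)⁻¹ (uY q) := by
  simpa [uY] using isKWeight_uK.mul (isKWeight_uF (q := q))

theorem adE_eq (y : Uq q) : adE q y = (uE q * y - y * uE q) * uKi q := by
  rw [adE, sub_mul, mul_assoc y]

theorem adF_eq (y : Uq q) : adF q y = uF q * y - adKi q y * uF q := by
  simp only [adF, adKi, mul_assoc]

theorem adE_uX : adE q (uX q) = 0 := by
  rw [adE_eq, uX, sub_self, zero_mul]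

theorem adE_uY (hq : q ≠ 0) : adE q (uY q) = uZ q := by
  have hEK : uE q * uK q = (q ^ 2)⁻¹ • (uK q * uE q) := isKWeight_uE.mul_uK (by simp [hq])
  have hcomm : uE q * uY q - uY q * uE q = uK q * uZ q := by
    simp only [uY, uZ, ← mul_assoc, hEK, smul_mul_assoc, mul_sub, mul_smul_comm]
  rw [adE_eq, hcomm, ← adK, (isKWeight_uZ hq).adK_eq, one_smul]

theorem adE_uZ (hq : q ≠ 0) (hq2 : q ^ 2 ≠ 1) : adE q (uZ q) = -(q + q⁻¹) • uX q := by
  have hKiE : uKi q * uE q = (q ^ 2)⁻¹ • (uE q * uKi q) :=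
    isKWeight_uE.uKi_mul (pow_ne_zero 2 hq)
  have hcomm : uE q * uZ q - uZ q * uE q =
      ((q - q⁻¹)⁻¹ * ((q ^ 2)⁻¹ - q ^ 2)) • (uE q * uK q) := by
    calc uE q * uZ q - uZ q * uE q
        = (q ^ 2)⁻¹ • (uE q * (uE q * uF q - uF q * uE q))
          - (uE q * uF q - uF q * uE q) * uE q := by
          simp only [uZ, mul_sub, sub_mul, mul_smul_comm, smul_mul_assoc, mul_assoc]; module
      _ = _ := by
          simp only [uE_mul_uF_sub_uF_mul_uE, mul_smul_comm, smul_mul_assoc, mul_sub, sub_mul,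
            uK_mul_uE, hKiE]
          module
  rw [adE_eq, hcomm, smul_mul_assoc, mul_assoc, uK_mul_uKi, mul_one, uX]
  congr 1
  have := sub_ne_zero.mpr hq2
  field_simp
  ring

theorem adF_uX (hq : q ≠ 0) : adF q (uX q) = -uZ q := by
  rw [adF_eq, uX, isKWeight_uE.adKi_eq (pow_ne_zero 2 hq), uZ, smul_mul_assoc]
  abel

theorem adF_uY (hq : q ≠ 0) : adF q (uY q) = 0 := by
  have hw : (q ^ 2)⁻¹ ≠ 0 := inv_ne_zero (pow_ne_zero 2 hq)
  have hFK : uF q * uK q = q ^ 2 • (uK q * uF q) := by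
    simpa using isKWeight_uF.mul_uK hw
  rw [adF_eq, isKWeight_uY.adKi_eq hw, inv_inv, uY, smul_mul_assoc, ← mul_assoc, hFK,
    smul_mul_assoc, mul_assoc, sub_self]

theorem adF_uZ (hq : q ≠ 0) (hq2 : q ^ 2 ≠ 1) : adF q (uZ q) = (q + q⁻¹) • uY q := by
  have hw : (q ^ 2)⁻¹ ≠ 0 := inv_ne_zero (pow_ne_zero 2 hq)
  have hFK : uF q * uK q = q ^ 2 • (uK q * uF q) := by
    simpa using isKWeight_uF.mul_uK hw
  have hKiF : uKi q * uF q = q ^ 2 • (uF q * uKi q) := by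
    simpa using isKWeight_uF.uKi_mul hw
  have hcomm : uF q * uZ q - uZ q * uF q =
      ((q - q⁻¹)⁻¹ * (q ^ 2 - (q ^ 2)⁻¹)) • (uK q * uF q) := by
    calc uF q * uZ q - uZ q * uF q
        = uF q * (uE q * uF q - uF q * uE q)
          - (q ^ 2)⁻¹ • ((uE q * uF q - uF q * uE q) * uF q) := by
          simp only [uZ, mul_sub, sub_mul, mul_smul_comm, smul_mul_assoc, mul_assoc]; module
      _ = _ := by
          simp only [uE_mul_uF_sub_uF_mul_uE, mul_smul_comm, smul_mul_assoc, mul_sub, sub_mul,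
            hFK, hKiF]
          match_scalars
          · ring
          · field_simp
            ring
  rw [adF_eq, (isKWeight_uZ hq).adKi_eq one_ne_zero, inv_one, one_smul, hcomm, uY]
  congr 1
  have := sub_ne_zero.mpr hq2
  field_simp
  ring

def standardRepGen (q : ℂ) : Fin 4 → Matrix (Fin 2) (Fin 2) ℂ :=
  ![!![0, 1; 0, 0], !![0, 0; 1, 0], !![q, 0; 0, q⁻¹], !![q⁻¹, 0; 0, q]]

theorem standardRepGen_respects_rel (hq : q ≠ 0) (hq2 : q ^ 2 ≠ 1)
    ⦃a b : FreeAlgebra ℂ (Fin 4)⦄ (h : UqRel q a b) :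
    lift ℂ (standardRepGen q) a = lift ℂ (standardRepGen q) b := by
  have := sub_ne_zero.mpr hq2
  cases h <;> simp only [map_mul, map_smul, map_sub, map_one, lift_ι_apply] <;>
    ext i j <;> fin_cases i <;> fin_cases j <;>
    simp [standardRepGen, Matrix.mul_apply, Fin.sum_univ_two, hq]
  all_goals field_simp
  ring

def standardRep (hq : q ≠ 0) (hq2 : q ^ 2 ≠ 1) : Uq q →ₐ[ℂ] Matrix (Fin 2) (Fin 2) ℂ :=
  RingQuot.liftAlgHom ℂ ⟨lift ℂ (standardRepGen q), standardRepGen_respects_rel hq hq2⟩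

theorem standardRep_mkAlgHom_ι (hq : q ≠ 0) (hq2 : q ^ 2 ≠ 1) (i : Fin 4) :
    standardRep hq hq2 (RingQuot.mkAlgHom ℂ (UqRel q) (ι ℂ i)) = standardRepGen q i := by
  rw [standardRep, RingQuot.liftAlgHom_mkAlgHom_apply, lift_ι_apply]

theorem linearIndependent_uX_uZ_uY (hq : q ≠ 0) (hq2 : q ^ 2 ≠ 1) :
    LinearIndependent ℂ ![uX q, uZ q, uY q] := by
  refine LinearIndependent.of_comp (standardRep hq hq2).toLinearMap ?_
  have himage : (standardRep hq hq2).toLinearMap ∘ ![uX q, uZ q, uY q] =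
      ![!![0, 1; 0, 0], !![(q ^ 2)⁻¹, 0; 0, -1], !![0, 0; q⁻¹, 0]] := by
    ext k i j
    fin_cases k <;> fin_cases i <;> fin_cases j <;>
      simp [uX, uZ, uY, uE, uF, uK, standardRep_mkAlgHom_ι, standardRepGen, Matrix.mul_apply]
  rw [himage, Fintype.linearIndependent_iff]
  intro g hg
  have h01 := congrFun (congrFun hg 0) 1
  have h11 := congrFun (congrFun hg 1) 1
  have h10 := congrFun (congrFun hg 1) 0
  simp [Fin.sum_univ_three, hq] at h01 h11 h10
  intro i
  fin_cases i <;> assumption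

theorem finrank_span_uX_uZ_uY (hq : q ≠ 0) (hq2 : q ^ 2 ≠ 1) :
    Module.finrank ℂ (Submodule.span ℂ ({uX q, uZ q, uY q} : Set (Uq q))) = 3 := by
  have hrange : Set.range ![uX q, uZ q, uY q] = {uX q, uZ q, uY q} := by
    rw [Matrix.range_cons, Matrix.range_cons_cons_empty, Set.singleton_union]
  rw [← hrange, finrank_span_eq_card (linearIndependent_uX_uZ_uY hq hq2), Fintype.card_fin]

theorem isLinearMap_adE : IsLinearMap ℂ (adE q) where
  map_add x y := by simp only [adE, mul_add, add_mul]; abel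
  map_smul c x := by simp only [adE, mul_smul_comm, smul_mul_assoc, smul_sub]

theorem isLinearMap_adF : IsLinearMap ℂ (adF q) where
  map_add x y := by simp only [adF, mul_add, add_mul]; abel
  map_smul c x := by simp only [adF, mul_smul_comm, smul_mul_assoc, smul_sub]

theorem isLinearMap_adK : IsLinearMap ℂ (adK q) where
  map_add x y := by simp only [adK, mul_add, add_mul]
  map_smul c x := by simp only [adK, mul_smul_comm, smul_mul_assoc]

theorem isLinearMap_adKi : IsLinearMap ℂ (adKi q) where
  map_add x y := by simp only [adKi, mul_add, add_mul]
  map_smul c x := by simp only [adKi, mul_smul_comm, smul_mul_assoc]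

theorem adE_mem_span (hq : q ≠ 0) (hq2 : q ^ 2 ≠ 1) {y : Uq q}
    (hy : y ∈ Submodule.span ℂ ({uX q, uZ q, uY q} : Set (Uq q))) :
    adE q y ∈ Submodule.span ℂ ({uX q, uZ q, uY q} : Set (Uq q)) := by
  refine isLinearMap_adE.apply_mem_span (fun x hx => ?_) hy
  rcases hx with rfl | rfl | rfl
  · rw [adE_uX]
    exact zero_mem _
  · rw [adE_uZ hq hq2]
    exact Submodule.smul_mem _ _ (Submodule.subset_span (by simp))
  · rw [adE_uY hq]
    exact Submodule.subset_span (by simp)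

theorem adF_mem_span (hq : q ≠ 0) (hq2 : q ^ 2 ≠ 1) {y : Uq q}
    (hy : y ∈ Submodule.span ℂ ({uX q, uZ q, uY q} : Set (Uq q))) :
    adF q y ∈ Submodule.span ℂ ({uX q, uZ q, uY q} : Set (Uq q)) := by
  refine isLinearMap_adF.apply_mem_span (fun x hx => ?_) hy
  rcases hx with rfl | rfl | rfl
  · rw [adF_uX hq]
    exact neg_mem (Submodule.subset_span (by simp))
  · rw [adF_uZ hq hq2]
    exact Submodule.smul_mem _ _ (Submodule.subset_span (by simp))
  · rw [adF_uY hq]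
    exact zero_mem _

theorem exists_isKWeight_of_mem (hq : q ≠ 0) {x : Uq q}
    (hx : x ∈ ({uX q, uZ q, uY q} : Set (Uq q))) : ∃ c ≠ 0, IsKWeight c x := by
  rcases hx with rfl | rfl | rfl
  exacts [⟨_, pow_ne_zero 2 hq, isKWeight_uE⟩, ⟨_, one_ne_zero, isKWeight_uZ hq⟩,
    ⟨_, inv_ne_zero (pow_ne_zero 2 hq), isKWeight_uY⟩]

theorem adK_mem_span (hq : q ≠ 0) {y : Uq q}
    (hy : y ∈ Submodule.span ℂ ({uX q, uZ q, uY q} : Set (Uq q))) :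
    adK q y ∈ Submodule.span ℂ ({uX q, uZ q, uY q} : Set (Uq q)) := by
  refine isLinearMap_adK.apply_mem_span (fun x hx => ?_) hy
  obtain ⟨c, -, hc⟩ := exists_isKWeight_of_mem hq hx
  rw [hc.adK_eq]
  exact Submodule.smul_mem _ _ (Submodule.subset_span hx)

theorem adKi_mem_span (hq : q ≠ 0) {y : Uq q}
    (hy : y ∈ Submodule.span ℂ ({uX q, uZ q, uY q} : Set (Uq q))) :
    adKi q y ∈ Submodule.span ℂ ({uX q, uZ q, uY q} : Set (Uq q)) := by
  refine isLinearMap_adKi.apply_mem_span (fun x hx => ?_) hy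
  obtain ⟨c, hc0, hc⟩ := exists_isKWeight_of_mem hq hx
  rw [hc.adKi_eq hc0]
  exact Submodule.smul_mem _ _ (Submodule.subset_span hx)

/-- In U_q(sl_2), the elements X = E, Z = q⁻²EF - FE, Y = KF span a
3-dimensional subspace which is closed under the left adjoint action
ad_x(y) = Σ x_{(1)} y S(x_{(2)}) (it suffices that it is closed under the adjoint
action of each of the generators E, F, K, K⁻¹, since ad is multiplicative). -/
theorem slq2_three_dimensional_ad_closed
    (q : ℂ) (hq : q ≠ 0) (hroot : ∀ n : ℕ, 0 < n → q ^ n ≠ 1) :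
    Module.finrank ℂ
      (Submodule.span ℂ ({uX q, uZ q, uY q} : Set (Uq q))) = 3 ∧
    ∀ y ∈ Submodule.span ℂ ({uX q, uZ q, uY q} : Set (Uq q)),
      adE q y ∈ Submodule.span ℂ ({uX q, uZ q, uY q} : Set (Uq q)) ∧
      adF q y ∈ Submodule.span ℂ ({uX q, uZ q, uY q} : Set (Uq q)) ∧
      adK q y ∈ Submodule.span ℂ ({uX q, uZ q, uY q} : Set (Uq q)) ∧
      adKi q y ∈ Submodule.span ℂ ({uX q, uZ q, uY q} : Set (Uq q)) := by
  have hq2 : q ^ 2 ≠ 1 := hroot 2 two_pos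
  exact ⟨finrank_span_uX_uZ_uY hq hq2, fun y hy =>
    ⟨adE_mem_span hq hq2 hy, adF_mem_span hq hq2 hy, adK_mem_span hq hy, adKi_mem_span hq hy⟩⟩

end
end

section
/- In the quantum exterior algebra ⋀_q V_{2π} generated by v_2, v_0, v_{-2} with relations v_2∧v_2 = 0, v_{-2}∧v_{-2} = 0, v_0∧v_2 = -q^{-2} v_2∧v_0, v_{-2}∧v_0 = -q^{-2} v_0∧v_{-2}, v_0∧v_0 = ((1-q⁴)/q³) v_2∧v_{-2}, v_{-2}∧v_2 = -v_2∧v_{-2}, the element v_2∧v_0∧v_{-2} is nonzero and the degree-3 component is 1-dimensional (so the algebra has total dimension 8 as in the classical case). -/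
noncomputable section

open FreeAlgebra

/-- The defining relations of the quantum exterior algebra ⋀_q V_{2π}:
generators v_2 = ι 0, v_0 = ι 1, v_{-2} = ι 2. -/
inductive ExtRel (q : ℂ) : FreeAlgebra ℂ (Fin 3) → FreeAlgebra ℂ (Fin 3) → Prop
  | r1 : ExtRel q (ι ℂ 0 * ι ℂ 0) 0
  | r2 : ExtRel q (ι ℂ 2 * ι ℂ 2) 0
  | r3 : ExtRel q (ι ℂ 1 * ι ℂ 0) (-((q ^ 2)⁻¹ • (ι ℂ 0 * ι ℂ 1)))
  | r4 : ExtRel q (ι ℂ 2 * ι ℂ 1) (-((q ^ 2)⁻¹ • (ι ℂ 1 * ι ℂ 2)))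
  | r5 : ExtRel q (ι ℂ 1 * ι ℂ 1) (((1 - q ^ 4) / q ^ 3) • (ι ℂ 0 * ι ℂ 2))
  | r6 : ExtRel q (ι ℂ 2 * ι ℂ 0) (-(ι ℂ 0 * ι ℂ 2))

/-- The quantum exterior algebra ⋀_q V_{2π}. -/
abbrev ExtQ (q : ℂ) := RingQuot (ExtRel q)

def ev2 (q : ℂ) : ExtQ q := RingQuot.mkAlgHom ℂ (ExtRel q) (ι ℂ 0)
def ev0 (q : ℂ) : ExtQ q := RingQuot.mkAlgHom ℂ (ExtRel q) (ι ℂ 1)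
def evm2 (q : ℂ) : ExtQ q := RingQuot.mkAlgHom ℂ (ExtRel q) (ι ℂ 2)

namespace QEAux

open Matrix Submodule

def M2 : Matrix (Fin 8) (Fin 8) ℂ := Matrix.of fun i j =>
  if (i = 1 ∧ j = 0) ∨ (i = 4 ∧ j = 2) ∨ (i = 5 ∧ j = 3) ∨ (i = 7 ∧ j = 6) then 1 else 0

def M0 (q : ℂ) : Matrix (Fin 8) (Fin 8) ℂ := Matrix.of fun i j =>
  if (i = 2 ∧ j = 0) ∨ (i = 6 ∧ j = 3) then 1
  else if (i = 4 ∧ j = 1) ∨ (i = 7 ∧ j = 5) then -(q^2)⁻¹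
  else if i = 5 ∧ j = 2 then (1-q^4)/q^3 else 0

def Mm2 (q : ℂ) : Matrix (Fin 8) (Fin 8) ℂ := Matrix.of fun i j =>
  if i = 3 ∧ j = 0 then 1 else if i = 5 ∧ j = 1 then -1
  else if i = 6 ∧ j = 2 then -(q^2)⁻¹ else if i = 7 ∧ j = 4 then (q^2)⁻¹ else 0

def Frep (q : ℂ) : FreeAlgebra ℂ (Fin 3) →ₐ[ℂ] Matrix (Fin 8) (Fin 8) ℂ :=
  FreeAlgebra.lift ℂ ![M2, M0 q, Mm2 q]

set_option maxHeartbeats 2000000 in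
lemma Frep_rel (q : ℂ) : ∀ ⦃x y⦄, ExtRel q x y → Frep q x = Frep q y := by
  intro x y h
  cases h <;>
    simp only [Frep, _root_.map_mul, _root_.map_neg, _root_.map_smul, _root_.map_zero,
      FreeAlgebra.lift_ι_apply,
      Matrix.cons_val_zero, Matrix.cons_val_one, Matrix.head_cons, Matrix.cons_val_two,
      Matrix.tail_cons] <;>
    · ext i j
      fin_cases i <;> fin_cases j <;>
        · simp [M2, M0, Mm2, Matrix.mul_apply, Fin.sum_univ_eight]
          try ring

def fq (q : ℂ) : ExtQ q →ₐ[ℂ] Matrix (Fin 8) (Fin 8) ℂ :=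
  RingQuot.liftAlgHom ℂ ⟨Frep q, Frep_rel q⟩

lemma fq_ev2 (q : ℂ) : fq q (ev2 q) = M2 := by
  simp [fq, ev2, RingQuot.liftAlgHom_mkAlgHom_apply, Frep]

lemma fq_ev0 (q : ℂ) : fq q (ev0 q) = M0 q := by
  simp [fq, ev0, RingQuot.liftAlgHom_mkAlgHom_apply, Frep]

lemma fq_evm2 (q : ℂ) : fq q (evm2 q) = Mm2 q := by
  simp [fq, evm2, RingQuot.liftAlgHom_mkAlgHom_apply, Frep]

/-- evaluation at the "vacuum" vector -/
def g (q : ℂ) : ExtQ q →ₗ[ℂ] (Fin 8 → ℂ) where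
  toFun x := (fq q x).mulVec (Pi.single 0 1)
  map_add' x y := by
    show (fq q (x + y)) *ᵥ _ = (fq q x) *ᵥ _ + (fq q y) *ᵥ _
    rw [_root_.map_add, Matrix.add_mulVec]
  map_smul' c x := by
    show (fq q (c • x)) *ᵥ _ = (RingHom.id ℂ) c • ((fq q x) *ᵥ _)
    rw [_root_.map_smul, Matrix.smul_mulVec, RingHom.id_apply]

-- column lemmas
lemma cM2_0 : M2 *ᵥ (Pi.single 0 1 : Fin 8 → ℂ) = Pi.single 1 1 := by
  rw [Matrix.mulVec_single]; funext i; fin_cases i <;> simp [M2, Pi.single_apply]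
lemma cM2_2 : M2 *ᵥ (Pi.single 2 1 : Fin 8 → ℂ) = Pi.single 4 1 := by
  rw [Matrix.mulVec_single]; funext i; fin_cases i <;> simp [M2, Pi.single_apply]
lemma cM2_3 : M2 *ᵥ (Pi.single 3 1 : Fin 8 → ℂ) = Pi.single 5 1 := by
  rw [Matrix.mulVec_single]; funext i; fin_cases i <;> simp [M2, Pi.single_apply]
lemma cM2_6 : M2 *ᵥ (Pi.single 6 1 : Fin 8 → ℂ) = Pi.single 7 1 := by
  rw [Matrix.mulVec_single]; funext i; fin_cases i <;> simp [M2, Pi.single_apply]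
lemma cM0_0 (q : ℂ) : M0 q *ᵥ (Pi.single 0 1 : Fin 8 → ℂ) = Pi.single 2 1 := by
  rw [Matrix.mulVec_single]; funext i; fin_cases i <;> simp [M0, Pi.single_apply]
lemma cM0_3 (q : ℂ) : M0 q *ᵥ (Pi.single 3 1 : Fin 8 → ℂ) = Pi.single 6 1 := by
  rw [Matrix.mulVec_single]; funext i; fin_cases i <;> simp [M0, Pi.single_apply]
lemma cMm_0 (q : ℂ) : Mm2 q *ᵥ (Pi.single 0 1 : Fin 8 → ℂ) = Pi.single 3 1 := by
  rw [Matrix.mulVec_single]; funext i; fin_cases i <;> simp [Mm2, Pi.single_apply]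

def bas (q : ℂ) : Fin 8 → ExtQ q := fun i =>
  if i = 0 then 1 else if i = 1 then ev2 q else if i = 2 then ev0 q
  else if i = 3 then evm2 q else if i = 4 then ev2 q * ev0 q
  else if i = 5 then ev2 q * evm2 q else if i = 6 then ev0 q * evm2 q
  else ev2 q * (ev0 q * evm2 q)

lemma g_apply (q : ℂ) (x : ExtQ q) : g q x = (fq q x) *ᵥ (Pi.single 0 1) := rfl

lemma bas_0 (q : ℂ) : bas q 0 = 1 := by simp [bas]
lemma bas_1 (q : ℂ) : bas q 1 = ev2 q := by simp [bas]
lemma bas_2 (q : ℂ) : bas q 2 = ev0 q := by simp [bas]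
lemma bas_3 (q : ℂ) : bas q 3 = evm2 q := by simp [bas]
lemma bas_4 (q : ℂ) : bas q 4 = ev2 q * ev0 q := by simp [bas]
lemma bas_5 (q : ℂ) : bas q 5 = ev2 q * evm2 q := by simp [bas]
lemma bas_6 (q : ℂ) : bas q 6 = ev0 q * evm2 q := by simp [bas]
lemma bas_7 (q : ℂ) : bas q 7 = ev2 q * (ev0 q * evm2 q) := by simp [bas]

lemma g_bas0 (q : ℂ) : g q (bas q 0) = Pi.single 0 1 := by
  rw [bas_0, g_apply, _root_.map_one, Matrix.one_mulVec]
lemma g_bas1 (q : ℂ) : g q (bas q 1) = Pi.single 1 1 := by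
  rw [bas_1, g_apply, fq_ev2, cM2_0]
lemma g_bas2 (q : ℂ) : g q (bas q 2) = Pi.single 2 1 := by
  rw [bas_2, g_apply, fq_ev0, cM0_0]
lemma g_bas3 (q : ℂ) : g q (bas q 3) = Pi.single 3 1 := by
  rw [bas_3, g_apply, fq_evm2, cMm_0]
lemma g_bas4 (q : ℂ) : g q (bas q 4) = Pi.single 4 1 := by
  rw [bas_4, g_apply, _root_.map_mul, fq_ev2, fq_ev0, ← Matrix.mulVec_mulVec, cM0_0, cM2_2]
lemma g_bas5 (q : ℂ) : g q (bas q 5) = Pi.single 5 1 := by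
  rw [bas_5, g_apply, _root_.map_mul, fq_ev2, fq_evm2, ← Matrix.mulVec_mulVec, cMm_0, cM2_3]
lemma g_bas6 (q : ℂ) : g q (bas q 6) = Pi.single 6 1 := by
  rw [bas_6, g_apply, _root_.map_mul, fq_ev0, fq_evm2, ← Matrix.mulVec_mulVec, cMm_0, cM0_3]
lemma g_bas7 (q : ℂ) : g q (bas q 7) = Pi.single 7 1 := by
  rw [bas_7, g_apply, _root_.map_mul, _root_.map_mul, fq_ev2, fq_ev0, fq_evm2,
    ← Matrix.mulVec_mulVec, ← Matrix.mulVec_mulVec, cMm_0, cM0_3, cM2_6]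

lemma g_bas (q : ℂ) (i : Fin 8) : g q (bas q i) = Pi.single i 1 := by
  fin_cases i
  exacts [g_bas0 q, g_bas1 q, g_bas2 q, g_bas3 q, g_bas4 q, g_bas5 q, g_bas6 q, g_bas7 q]

lemma bas_li (q : ℂ) : LinearIndependent ℂ (bas q) := by
  apply LinearIndependent.of_comp (g q)
  have h : (⇑(g q) ∘ bas q) = fun i => (Pi.single i 1 : Fin 8 → ℂ) :=
    funext fun i => g_bas q i
  rw [h]
  have := (Pi.basisFun ℂ (Fin 8)).linearIndependent
  rwa [show ⇑(Pi.basisFun ℂ (Fin 8)) = fun i => (Pi.single i 1 : Fin 8 → ℂ) from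
    funext fun i => Pi.basisFun_apply ℂ (Fin 8) i] at this

-- specialized rewriting lemmas (generic ones fail to match RingQuot instances in rw/simp)
lemma nm (q : ℂ) (x y : ExtQ q) : -x * y = -(x * y) := neg_mul x y
lemma mn (q : ℂ) (x y : ExtQ q) : x * -y = -(x * y) := mul_neg x y
lemma sma (q : ℂ) (c : ℂ) (x y : ExtQ q) : (c • x) * y = c • (x * y) := smul_mul_assoc c x y
lemma msc (q : ℂ) (c : ℂ) (x y : ExtQ q) : x * (c • y) = c • (x * y) := mul_smul_comm c x y
lemma ss (q : ℂ) (c d : ℂ) (x : ExtQ q) : c • d • x = (c * d) • x := smul_smul c d x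
lemma sneg (q : ℂ) (c : ℂ) (x : ExtQ q) : c • -x = -(c • x) := smul_neg c x
lemma nneg (q : ℂ) (x : ExtQ q) : - -x = x := neg_neg x
lemma mz (q : ℂ) (x : ExtQ q) : x * 0 = 0 := mul_zero x
lemma zm (q : ℂ) (x : ExtQ q) : 0 * x = 0 := zero_mul x
lemma sz (q : ℂ) (c : ℂ) : c • (0 : ExtQ q) = 0 := smul_zero c
lemma nz (q : ℂ) : -(0 : ExtQ q) = 0 := neg_zero
lemma mo (q : ℂ) (x : ExtQ q) : x * 1 = x := mul_one x
lemma ma (q : ℂ) (x y z : ExtQ q) : x * (y + z) = x * y + x * z := mul_add x y z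
lemma am (q : ℂ) (x y z : ExtQ q) : (x + y) * z = x * z + y * z := add_mul x y z
lemma masc (q : ℂ) (x y z : ExtQ q) : x * y * z = x * (y * z) := mul_assoc x y z
lemma alg_smul (q : ℂ) (r : ℂ) (x : ExtQ q) :
    algebraMap ℂ (ExtQ q) r * x = r • x := (Algebra.smul_def r x).symm

-- quadratic relations in ExtQ
lemma p22 (q : ℂ) : ev2 q * ev2 q = 0 := by
  rw [ev2, ← _root_.map_mul, RingQuot.mkAlgHom_rel ℂ ExtRel.r1, _root_.map_zero]
lemma pmm (q : ℂ) : evm2 q * evm2 q = 0 := by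
  rw [evm2, ← _root_.map_mul, RingQuot.mkAlgHom_rel ℂ ExtRel.r2, _root_.map_zero]
lemma p02 (q : ℂ) : ev0 q * ev2 q = -((q ^ 2)⁻¹ • (ev2 q * ev0 q)) := by
  rw [ev0, ev2, ← _root_.map_mul, RingQuot.mkAlgHom_rel ℂ ExtRel.r3, _root_.map_neg,
    _root_.map_smul, _root_.map_mul]
lemma pm0 (q : ℂ) : evm2 q * ev0 q = -((q ^ 2)⁻¹ • (ev0 q * evm2 q)) := by
  rw [evm2, ev0, ← _root_.map_mul, RingQuot.mkAlgHom_rel ℂ ExtRel.r4, _root_.map_neg,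
    _root_.map_smul, _root_.map_mul]
lemma p00 (q : ℂ) : ev0 q * ev0 q = ((1 - q ^ 4) / q ^ 3) • (ev2 q * evm2 q) := by
  rw [ev0, ev2, evm2, ← _root_.map_mul, RingQuot.mkAlgHom_rel ℂ ExtRel.r5,
    _root_.map_smul, _root_.map_mul]
lemma pm2 (q : ℂ) : evm2 q * ev2 q = -(ev2 q * evm2 q) := by
  rw [evm2, ev2, ← _root_.map_mul, RingQuot.mkAlgHom_rel ℂ ExtRel.r6, _root_.map_neg,
    _root_.map_mul]

-- cubic reductions
lemma G24 (q : ℂ) : ev2 q * (ev2 q * ev0 q) = 0 := by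
  rw [← masc, p22, zm]
lemma G25 (q : ℂ) : ev2 q * (ev2 q * evm2 q) = 0 := by
  rw [← masc, p22, zm]
lemma G04 (q : ℂ) : ev0 q * (ev2 q * ev0 q) = 0 := by
  rw [← masc, p02, nm, sma, masc, p00, msc, ← masc, p22, zm, sz, sz, nz]
lemma G05 (q : ℂ) :
    ev0 q * (ev2 q * evm2 q) = -((q ^ 2)⁻¹ • (ev2 q * (ev0 q * evm2 q))) := by
  rw [← masc, p02, nm, sma, masc]
lemma G06 (q : ℂ) : ev0 q * (ev0 q * evm2 q) = 0 := by
  rw [← masc, p00, sma, masc, pmm, mz, sz]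
lemma Gm4 (q : ℂ) :
    evm2 q * (ev2 q * ev0 q) = (q ^ 2)⁻¹ • (ev2 q * (ev0 q * evm2 q)) := by
  rw [← masc, pm2, nm, masc, pm0, mn, msc, nneg]
lemma Gm5 (q : ℂ) : evm2 q * (ev2 q * evm2 q) = 0 := by
  rw [← masc, pm2, nm, masc, pmm, mz, nz]
lemma Gm6 (q : ℂ) : evm2 q * (ev0 q * evm2 q) = 0 := by
  rw [← masc, pm0, nm, sma, masc, pmm, mz, sz, nz]
lemma G27 (q : ℂ) : ev2 q * (ev2 q * (ev0 q * evm2 q)) = 0 := by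
  rw [← masc, p22, zm]
lemma G07 (q : ℂ) : ev0 q * (ev2 q * (ev0 q * evm2 q)) = 0 := by
  rw [← masc, p02, nm, sma, masc, G06, mz, sz, nz]
lemma Gm7 (q : ℂ) : evm2 q * (ev2 q * (ev0 q * evm2 q)) = 0 := by
  rw [← masc, pm2, nm, masc, Gm6, mz, nz]

def Sq (q : ℂ) : Set (ExtQ q) :=
  {1, ev2 q, ev0 q, evm2 q, ev2 q * ev0 q, ev2 q * evm2 q, ev0 q * evm2 q,
    ev2 q * (ev0 q * evm2 q)}

lemma ev2_mul_mem (q : ℂ) (s : ExtQ q) (hs : s ∈ span ℂ (Sq q)) :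
    ev2 q * s ∈ span ℂ (Sq q) := by
  induction hs using Submodule.span_induction with
  | mem x hx =>
    simp only [Sq, Set.mem_insert_iff, Set.mem_singleton_iff] at hx
    rcases hx with rfl | rfl | rfl | rfl | rfl | rfl | rfl | rfl <;>
    · try simp only [mo, p22, pmm, p02, pm0, p00, pm2, G24, G25, G04, G05, G06,
        Gm4, Gm5, Gm6, G27, G07, Gm7, mn, nm, msc, sma, ss, sneg, nneg, mz, zm, sz, nz]
      first
      | exact zero_mem _
      | (apply subset_span; simp [Sq]; done)
      | (apply Submodule.smul_mem; apply subset_span; simp [Sq]; done)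
      | (apply neg_mem; apply Submodule.smul_mem; apply subset_span; simp [Sq]; done)
      | (apply neg_mem; apply subset_span; simp [Sq]; done)
  | zero => rw [mz]; exact zero_mem _
  | add x y hx hy ihx ihy => rw [ma]; exact add_mem ihx ihy
  | smul c x hx ih => rw [msc]; exact Submodule.smul_mem _ _ ih

lemma ev0_mul_mem (q : ℂ) (s : ExtQ q) (hs : s ∈ span ℂ (Sq q)) :
    ev0 q * s ∈ span ℂ (Sq q) := by
  induction hs using Submodule.span_induction with
  | mem x hx =>
    simp only [Sq, Set.mem_insert_iff, Set.mem_singleton_iff] at hx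
    rcases hx with rfl | rfl | rfl | rfl | rfl | rfl | rfl | rfl <;>
    · try simp only [mo, p22, pmm, p02, pm0, p00, pm2, G24, G25, G04, G05, G06,
        Gm4, Gm5, Gm6, G27, G07, Gm7, mn, nm, msc, sma, ss, sneg, nneg, mz, zm, sz, nz]
      first
      | exact zero_mem _
      | (apply subset_span; simp [Sq]; done)
      | (apply Submodule.smul_mem; apply subset_span; simp [Sq]; done)
      | (apply neg_mem; apply Submodule.smul_mem; apply subset_span; simp [Sq]; done)
      | (apply neg_mem; apply subset_span; simp [Sq]; done)
  | zero => rw [mz]; exact zero_mem _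
  | add x y hx hy ihx ihy => rw [ma]; exact add_mem ihx ihy
  | smul c x hx ih => rw [msc]; exact Submodule.smul_mem _ _ ih

lemma evm2_mul_mem (q : ℂ) (s : ExtQ q) (hs : s ∈ span ℂ (Sq q)) :
    evm2 q * s ∈ span ℂ (Sq q) := by
  induction hs using Submodule.span_induction with
  | mem x hx =>
    simp only [Sq, Set.mem_insert_iff, Set.mem_singleton_iff] at hx
    rcases hx with rfl | rfl | rfl | rfl | rfl | rfl | rfl | rfl <;>
    · try simp only [mo, p22, pmm, p02, pm0, p00, pm2, G24, G25, G04, G05, G06,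
        Gm4, Gm5, Gm6, G27, G07, Gm7, mn, nm, msc, sma, ss, sneg, nneg, mz, zm, sz, nz]
      first
      | exact zero_mem _
      | (apply subset_span; simp [Sq]; done)
      | (apply Submodule.smul_mem; apply subset_span; simp [Sq]; done)
      | (apply neg_mem; apply Submodule.smul_mem; apply subset_span; simp [Sq]; done)
      | (apply neg_mem; apply subset_span; simp [Sq]; done)
  | zero => rw [mz]; exact zero_mem _
  | add x y hx hy ihx ihy => rw [ma]; exact add_mem ihx ihy
  | smul c x hx ih => rw [msc]; exact Submodule.smul_mem _ _ ih

lemma span8_top (q : ℂ) : span ℂ (Sq q) = ⊤ := by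
  have key : ∀ y : FreeAlgebra ℂ (Fin 3), ∀ s ∈ span ℂ (Sq q),
      RingQuot.mkAlgHom ℂ (ExtRel q) y * s ∈ span ℂ (Sq q) := by
    intro y
    induction y using FreeAlgebra.induction with
    | grade0 r =>
      intro s hs
      rw [AlgHom.commutes, alg_smul]
      exact Submodule.smul_mem _ _ hs
    | grade1 i =>
      fin_cases i
      · exact fun s hs => ev2_mul_mem q s hs
      · exact fun s hs => ev0_mul_mem q s hs
      · exact fun s hs => evm2_mul_mem q s hs
    | mul a b ha hb =>
      intro s hs
      rw [_root_.map_mul, masc]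
      exact ha _ (hb _ hs)
    | add a b ha hb =>
      intro s hs
      rw [_root_.map_add, am]
      exact add_mem (ha s hs) (hb s hs)
  rw [eq_top_iff]
  rintro x -
  obtain ⟨y, rfl⟩ := RingQuot.mkAlgHom_surjective ℂ (ExtRel q) x
  have h1 : (1 : ExtQ q) ∈ span ℂ (Sq q) := subset_span (by simp [Sq])
  simpa using key y 1 h1

lemma n7_ne (q : ℂ) : ev2 q * (ev0 q * evm2 q) ≠ 0 := by
  intro h
  have h2 := congrArg (g q) h
  rw [_root_.map_zero, ← bas_7, g_bas7] at h2
  have h3 := congrFun h2 7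
  simp [Pi.single_apply] at h3

lemma tripleSpan (q : ℂ) :
    Submodule.span ℂ
      {w : ExtQ q | ∃ x ∈ ({ev2 q, ev0 q, evm2 q} : Set (ExtQ q)),
        ∃ y ∈ ({ev2 q, ev0 q, evm2 q} : Set (ExtQ q)),
        ∃ z ∈ ({ev2 q, ev0 q, evm2 q} : Set (ExtQ q)), w = x * y * z} =
    Submodule.span ℂ {ev2 q * (ev0 q * evm2 q)} := by
  apply le_antisymm
  · rw [span_le]
    rintro w ⟨x, hx, y, hy, z, hz, rfl⟩
    simp only [Set.mem_insert_iff, Set.mem_singleton_iff] at hx hy hz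
    rcases hx with rfl | rfl | rfl <;> rcases hy with rfl | rfl | rfl <;>
      rcases hz with rfl | rfl | rfl <;>
    · try simp only [masc, p22, pmm, p02, pm0, p00, pm2, G24, G25, G04, G05, G06,
        Gm4, Gm5, Gm6, G27, G07, Gm7, mn, nm, msc, sma, ss, sneg, nneg, mz, zm, sz, nz]
      first
      | exact zero_mem _
      | exact Submodule.mem_span_singleton_self _
      | (apply Submodule.smul_mem; exact Submodule.mem_span_singleton_self _)
      | (apply neg_mem; apply Submodule.smul_mem; exact Submodule.mem_span_singleton_self _)
      | (apply neg_mem; exact Submodule.mem_span_singleton_self _)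
  · rw [span_le, Set.singleton_subset_iff]
    exact subset_span ⟨ev2 q, by simp, ev0 q, by simp, evm2 q, by simp,
      (mul_assoc _ _ _).symm⟩

lemma range_bas (q : ℂ) : ⊤ ≤ span ℂ (Set.range (bas q)) := by
  rw [← span8_top q]
  apply Submodule.span_le.mpr
  intro x hx
  simp only [Sq, Set.mem_insert_iff, Set.mem_singleton_iff] at hx
  rcases hx with rfl | rfl | rfl | rfl | rfl | rfl | rfl | rfl
  · exact subset_span ⟨0, bas_0 q⟩
  · exact subset_span ⟨1, bas_1 q⟩
  · exact subset_span ⟨2, bas_2 q⟩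
  · exact subset_span ⟨3, bas_3 q⟩
  · exact subset_span ⟨4, bas_4 q⟩
  · exact subset_span ⟨5, bas_5 q⟩
  · exact subset_span ⟨6, bas_6 q⟩
  · exact subset_span ⟨7, bas_7 q⟩

end QEAux

/-- In ⋀_q V_{2π}, the element v_2∧v_0∧v_{-2} is nonzero, the degree-3
component (the span of all triple products of generators) is 1-dimensional, and the
whole algebra has total dimension 8 as in the classical case. -/
theorem quantum_exterior_algebra_top_degree
    (q : ℂ) (hq : q ≠ 0) (hroot : ∀ n : ℕ, 0 < n → q ^ n ≠ 1) :
    ev2 q * ev0 q * evm2 q ≠ 0 ∧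
    Module.finrank ℂ (Submodule.span ℂ
      {w : ExtQ q | ∃ x ∈ ({ev2 q, ev0 q, evm2 q} : Set (ExtQ q)),
        ∃ y ∈ ({ev2 q, ev0 q, evm2 q} : Set (ExtQ q)),
        ∃ z ∈ ({ev2 q, ev0 q, evm2 q} : Set (ExtQ q)), w = x * y * z}) = 1 ∧
    Module.finrank ℂ (ExtQ q) = 8 := by
  refine ⟨?_, ?_, ?_⟩
  · rw [QEAux.masc]
    exact QEAux.n7_ne q
  · rw [QEAux.tripleSpan q]
    exact finrank_span_singleton (QEAux.n7_ne q)
  · have B := Module.Basis.mk (QEAux.bas_li q) (QEAux.range_bas q)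
    rw [Module.finrank_eq_card_basis B]
    simp

end
end

section
/- In the q-deformed Clifford algebra Cl_q(sl_2), the element γ_q = -(1/(2c²))(c v_0 + v_2 v_0 v_{-2}) squares to the scalar (1+q²)/(4cq). -/
/-- In the q-deformed Clifford algebra Cl_q(sl_2) (any unital associative
ℂ-algebra generated with the listed relations), the element
γ_q = -(1/(2c²))(c v_0 + v_2 v_0 v_{-2}) squares to the scalar (1+q²)/(4cq). -/
theorem gamma_squares_to_scalar
    (q c : ℂ) (hq : q ≠ 0) (hc : c ≠ 0) (hroot : ∀ n : ℕ, 0 < n → q ^ n ≠ 1)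
    {A : Type} [Ring A] [Algebra ℂ A]
    (v2 v0 vm2 : A)
    (h1 : v2 * v2 = 0) (h2 : vm2 * vm2 = 0)
    (h3 : v0 * v2 = -((q ^ 2)⁻¹ • (v2 * v0)))
    (h4 : vm2 * v0 = -((q ^ 2)⁻¹ • (v0 * vm2)))
    (h5 : v0 * v0 = ((1 - q ^ 4) / q ^ 3) • (v2 * vm2) + ((q ^ 2 + 1) / q * c) • (1 : A))
    (h6 : vm2 * v2 = -(v2 * vm2) + ((q ^ 2 + 1) / q ^ 2 * c) • (1 : A))
    (γ : A) (hγ : γ = (-(1 / (2 * c ^ 2)) : ℂ) • (c • v0 + v2 * v0 * vm2)) :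
    γ * γ = ((1 + q ^ 2) / (4 * c * q)) • (1 : A) := by
  set X := v2 * v0 * vm2 with hX
  have e0 : v2 * (v0 * v2) = 0 := by
    rw [h3, mul_neg, mul_smul_comm, ← mul_assoc, h1, zero_mul, smul_zero, neg_zero]
  have e0' : v2 * v0 * v2 = 0 := by rw [mul_assoc, e0]
  have mid : v2 * (v0 * v0) * vm2 = ((q ^ 2 + 1) / q * c) • (v2 * vm2) := by
    rw [h5, mul_add, add_mul]
    simp [mul_smul_comm, smul_mul_assoc, ← mul_assoc, h1]
  have hvX : v0 * X = -((q ^ 2)⁻¹ • (v2 * (v0 * v0) * vm2)) := by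
    rw [hX, show v0 * (v2 * v0 * vm2) = v0 * v2 * (v0 * vm2) from by noncomm_ring, h3]
    simp [smul_mul_assoc, neg_mul, ← mul_assoc]
  have hXv : X * v0 = -((q ^ 2)⁻¹ • (v2 * (v0 * v0) * vm2)) := by
    rw [hX, mul_assoc, mul_assoc, h4]
    simp [mul_neg, mul_smul_comm, ← mul_assoc]
  have hX2 : X * X = ((q ^ 2 + 1) / q ^ 2 * c) • (v2 * (v0 * v0) * vm2) := by
    rw [hX, show v2 * v0 * vm2 * (v2 * v0 * vm2) = v2 * v0 * (vm2 * v2) * (v0 * vm2) from by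
      noncomm_ring, h6, mul_add, add_mul]
    simp [mul_smul_comm, smul_mul_assoc, ← mul_assoc, e0']
  subst hγ
  rw [smul_mul_smul_comm]
  simp only [mul_add, add_mul, smul_mul_assoc, mul_smul_comm, smul_smul]
  rw [hvX, hXv, hX2, mid, h5]
  have h2c : (2 * c ^ 2 : ℂ) ≠ 0 := by simp [hc]
  have h4cq : (4 * c * q : ℂ) ≠ 0 := by simp [hc, hq]
  match_scalars
  · field_simp
    ring
  · have L : -(1 / (2 * c ^ 2)) * -(1 / (2 * c ^ 2)) * (c * (c * ((q ^ 2 + 1) / q * c)))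
        = ((q ^ 2 + 1) * c ^ 3 / c ^ 4) / (4 * q) := by ring
    have hcc : c ^ 3 / c ^ 4 = 1 / c := by
      rw [div_eq_div_iff (pow_ne_zero 4 hc) hc]; ring
    rw [mul_one, mul_one, L, mul_div_assoc, hcc, div_eq_div_iff (by simp [hq, hc]) (by simp [hq, hc])]
    field_simp
    ring
end

section
/- In Cl_q(sl_2), the differential d_{Cl_q}(ω) = γ_q ω - (-1)^{p(ω)} ω γ_q (with γ_q = -(1/(2c²))(c v_0 + v_2 v_0 v_{-2})) satisfies d_{Cl_q}(v_2) = -(1/c) v_2 v_0, d_{Cl_q}(v_0) = ((1+q²)/(qc))(v_2 v_{-2} - c), and d_{Cl_q}(v_{-2}) = -(1/c) v_0 v_{-2}. -/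
set_option maxHeartbeats 1600000


/-- In Cl_q(sl_2) the differential d(ω) = [γ_q, ω] (supercommutator,
so d(ω) = γ_q ω + ω γ_q on the odd generators) satisfies
d(v_2) = -(1/c)v_2v_0, d(v_0) = ((1+q²)/(qc))(v_2v_{-2} - c), d(v_{-2}) = -(1/c)v_0v_{-2}. -/
theorem differential_on_generators
    (q c : ℂ) (hq : q ≠ 0) (hc : c ≠ 0) (hroot : ∀ n : ℕ, 0 < n → q ^ n ≠ 1)
    {A : Type} [Ring A] [Algebra ℂ A]
    (v2 v0 vm2 : A)
    (h1 : v2 * v2 = 0) (h2 : vm2 * vm2 = 0)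
    (h3 : v0 * v2 = -((q ^ 2)⁻¹ • (v2 * v0)))
    (h4 : vm2 * v0 = -((q ^ 2)⁻¹ • (v0 * vm2)))
    (h5 : v0 * v0 = ((1 - q ^ 4) / q ^ 3) • (v2 * vm2) + ((q ^ 2 + 1) / q * c) • (1 : A))
    (h6 : vm2 * v2 = -(v2 * vm2) + ((q ^ 2 + 1) / q ^ 2 * c) • (1 : A))
    (γ : A) (hγ : γ = (-(1 / (2 * c ^ 2)) : ℂ) • (c • v0 + v2 * v0 * vm2)) :
    γ * v2 + v2 * γ = (-(1 / c) : ℂ) • (v2 * v0) ∧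
    γ * v0 + v0 * γ = ((1 + q ^ 2) / (q * c)) • (v2 * vm2 - c • (1 : A)) ∧
    γ * vm2 + vm2 * γ = (-(1 / c) : ℂ) • (v0 * vm2) := by
  have h1' : ∀ x : A, v2 * (v2 * x) = 0 := fun x => by
    rw [← mul_assoc, h1, zero_mul]
  have h2' : ∀ x : A, vm2 * (vm2 * x) = 0 := fun x => by
    rw [← mul_assoc, h2, zero_mul]
  have h3' : ∀ x : A, v0 * (v2 * x) = -((q ^ 2)⁻¹ • (v2 * (v0 * x))) := fun x => by
    rw [← mul_assoc, h3, neg_mul, smul_mul_assoc, mul_assoc]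
  have h4' : ∀ x : A, vm2 * (v0 * x) = -((q ^ 2)⁻¹ • (v0 * (vm2 * x))) := fun x => by
    rw [← mul_assoc, h4, neg_mul, smul_mul_assoc, mul_assoc]
  have h5' : ∀ x : A, v0 * (v0 * x) =
      ((1 - q ^ 4) / q ^ 3) • (v2 * (vm2 * x)) + ((q ^ 2 + 1) / q * c) • x := fun x => by
    rw [← mul_assoc, h5, add_mul, smul_mul_assoc, smul_mul_assoc, mul_assoc, one_mul]
  have h6' : ∀ x : A, vm2 * (v2 * x) =
      -(v2 * (vm2 * x)) + ((q ^ 2 + 1) / q ^ 2 * c) • x := fun x => by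
    rw [← mul_assoc, h6, add_mul, neg_mul, smul_mul_assoc, mul_assoc, one_mul]
  subst hγ
  have hq2 : q ^ 2 ≠ 0 := pow_ne_zero _ hq
  refine ⟨?_, ?_, ?_⟩ <;>
  · simp only [smul_add, add_mul, mul_add, smul_mul_assoc, mul_smul_comm, mul_assoc,
      h1, h2, h3, h4, h5, h6, h1', h2', h3', h4', h5', h6',
      neg_mul, mul_neg, smul_neg, neg_neg, smul_smul, smul_zero, mul_zero, zero_mul,
      neg_zero, add_zero, zero_add, mul_one, one_mul, smul_sub]
    match_scalars <;> (clear h1 h2 h3 h4 h5 h6 h1' h2' h3' h4' h5' h6' v2 v0 vm2; field_simp; ring)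
end

section
/- On the quantum exterior algebra ⋀_q V_{2π}, the map d defined on generators by d(v_2) = -(1/c) v_2∧v_0, d(v_0) = ((1+q²)/(qc)) v_2∧v_{-2}, d(v_{-2}) = -(1/c) v_0∧v_{-2}, extended as an odd derivation (graded Leibniz rule), is well-defined and satisfies d² = 0. -/
noncomputable section

open FreeAlgebra

namespace QED

variable (q c : ℂ)

-- Specialized neg/smul lemmas (the generic `simp` lemmas fail to unify
-- against `RingQuot`'s primitive instances).
lemma t1 (a b : ExtQ q) : -a * b = -(a * b) := neg_mul a b
lemma t2 (a b : ExtQ q) : a * -b = -(a * b) := mul_neg a b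
lemma t3 (s : ℂ) (a : ExtQ q) : s • -a = -(s • a) := smul_neg s a
lemma t4 (a b : ExtQ q) : -(a + b) = -a + -b := neg_add a b
lemma t5 (a : ExtQ q) : - -a = a := neg_neg a
lemma t6 (a : ExtQ q) : -a + a = 0 := neg_add_cancel a
lemma t7 (a : ExtQ q) : a + -a = 0 := add_neg_cancel a
lemma t8 : -(0 : ExtQ q) = 0 := neg_zero
lemma t9 (a b : ExtQ q) : a - b = a + -b := sub_eq_add_neg a b
lemma t10 (s : ℂ) (a : ExtQ q) : (-s) • a = -(s • a) := neg_smul s a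

lemma e1 : ev2 q * ev2 q = 0 := by
  have h := RingQuot.mkAlgHom_rel ℂ (ExtRel.r1 (q := q))
  simpa [ev2] using h

lemma e2 : evm2 q * evm2 q = 0 := by
  have h := RingQuot.mkAlgHom_rel ℂ (ExtRel.r2 (q := q))
  simpa [evm2] using h

lemma e3 : ev0 q * ev2 q = -((q ^ 2)⁻¹ • (ev2 q * ev0 q)) := by
  have h := RingQuot.mkAlgHom_rel ℂ (ExtRel.r3 (q := q))
  simpa [ev0, ev2] using h

lemma e4 : evm2 q * ev0 q = -((q ^ 2)⁻¹ • (ev0 q * evm2 q)) := by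
  have h := RingQuot.mkAlgHom_rel ℂ (ExtRel.r4 (q := q))
  simpa [ev0, evm2] using h

lemma e5 : ev0 q * ev0 q = ((1 - q ^ 4) / q ^ 3) • (ev2 q * evm2 q) := by
  have h := RingQuot.mkAlgHom_rel ℂ (ExtRel.r5 (q := q))
  simpa [ev0, ev2, evm2] using h

lemma e6 : evm2 q * ev2 q = -(ev2 q * evm2 q) := by
  have h := RingQuot.mkAlgHom_rel ℂ (ExtRel.r6 (q := q))
  simpa [ev2, evm2] using h

lemma e1' (x : ExtQ q) : ev2 q * (ev2 q * x) = 0 := by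
  rw [← mul_assoc, e1, zero_mul]

lemma e2' (x : ExtQ q) : evm2 q * (evm2 q * x) = 0 := by
  rw [← mul_assoc, e2, zero_mul]

lemma e3' (x : ExtQ q) :
    ev0 q * (ev2 q * x) = -((q ^ 2)⁻¹ • (ev2 q * (ev0 q * x))) := by
  rw [← mul_assoc, e3, t1, smul_mul_assoc, mul_assoc]

lemma e4' (x : ExtQ q) :
    evm2 q * (ev0 q * x) = -((q ^ 2)⁻¹ • (ev0 q * (evm2 q * x))) := by
  rw [← mul_assoc, e4, t1, smul_mul_assoc, mul_assoc]

lemma e5' (x : ExtQ q) :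
    ev0 q * (ev0 q * x) = ((1 - q ^ 4) / q ^ 3) • (ev2 q * (evm2 q * x)) := by
  rw [← mul_assoc, e5, smul_mul_assoc, mul_assoc]

lemma e6' (x : ExtQ q) : evm2 q * (ev2 q * x) = -(ev2 q * (evm2 q * x)) := by
  rw [← mul_assoc, e6, t1, mul_assoc]

/-- the images of the generators under d -/
def dv2 : ExtQ q := -((1 / c : ℂ) • (ev2 q * ev0 q))
def dv0 : ExtQ q := ((1 + q ^ 2) / (q * c)) • (ev2 q * evm2 q)
def dvm2 : ExtQ q := -((1 / c : ℂ) • (ev0 q * evm2 q))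

/-- generator matrices for the triangular representation -/
def M : Fin 3 → Matrix (Fin 2) (Fin 2) (ExtQ q) :=
  ![!![-(ev2 q), dv2 q c; 0, ev2 q],
    !![-(ev0 q), dv0 q c; 0, ev0 q],
    !![-(evm2 q), dvm2 q c; 0, evm2 q]]

def f : FreeAlgebra ℂ (Fin 3) →ₐ[ℂ] Matrix (Fin 2) (Fin 2) (ExtQ q) :=
  FreeAlgebra.lift ℂ (M q c)

lemma f_rel : ∀ ⦃x y⦄, ExtRel q x y → f q c x = f q c y := by
  intro x y h
  induction h <;>
  · ext i j
    fin_cases i <;> fin_cases j <;>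
      simp [f, M, dv2, dv0, dvm2, Matrix.mul_apply, Fin.sum_univ_two,
        e1, e2, e3, e4, e5, e6, e1', e2', e3', e4', e5', e6',
        mul_assoc, smul_mul_assoc, mul_smul_comm, smul_smul,
        t1, t2, t3, t4, t5, t6, t7, t8, t10, smul_add]

def Φ : ExtQ q →ₐ[ℂ] Matrix (Fin 2) (Fin 2) (ExtQ q) :=
  RingQuot.liftAlgHom ℂ ⟨f q c, f_rel q c⟩

lemma Φ_ev2 : Φ q c (ev2 q) = !![-(ev2 q), dv2 q c; 0, ev2 q] := by
  simp [Φ, ev2, RingQuot.liftAlgHom_mkAlgHom_apply, f, M]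

lemma Φ_ev0 : Φ q c (ev0 q) = !![-(ev0 q), dv0 q c; 0, ev0 q] := by
  simp [Φ, ev0, RingQuot.liftAlgHom_mkAlgHom_apply, f, M]

lemma Φ_evm2 : Φ q c (evm2 q) = !![-(evm2 q), dvm2 q c; 0, evm2 q] := by
  simp [Φ, evm2, RingQuot.liftAlgHom_mkAlgHom_apply, f, M]

/-- the differential -/
def d : ExtQ q →ₗ[ℂ] ExtQ q where
  toFun a := Φ q c a 0 1
  map_add' a b := by simp [map_add]
  map_smul' r a := by simp [map_smul]

/-- the sign automorphism -/
def g : FreeAlgebra ℂ (Fin 3) →ₐ[ℂ] ExtQ q :=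
  FreeAlgebra.lift ℂ ![-(ev2 q), -(ev0 q), -(evm2 q)]

lemma g_rel : ∀ ⦃x y⦄, ExtRel q x y → g q x = g q y := by
  intro x y h
  induction h <;>
    simp [g, e1, e2, e3, e4, e5, e6, t1, t2, t3, t5]

def σ : ExtQ q →ₐ[ℂ] ExtQ q := RingQuot.liftAlgHom ℂ ⟨g q, g_rel q⟩

lemma σ_ev2 : σ q (ev2 q) = -(ev2 q) := by
  simp [σ, ev2, RingQuot.liftAlgHom_mkAlgHom_apply, g]

lemma σ_ev0 : σ q (ev0 q) = -(ev0 q) := by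
  simp [σ, ev0, RingQuot.liftAlgHom_mkAlgHom_apply, g]

lemma σ_evm2 : σ q (evm2 q) = -(evm2 q) := by
  simp [σ, evm2, RingQuot.liftAlgHom_mkAlgHom_apply, g]

/-- induction principle for ExtQ -/
lemma extInd {P : ExtQ q → Prop}
    (halg : ∀ r : ℂ, P (algebraMap ℂ (ExtQ q) r))
    (h2 : P (ev2 q)) (h0 : P (ev0 q)) (hm : P (evm2 q))
    (hadd : ∀ a b, P a → P b → P (a + b))
    (hmul : ∀ a b, P a → P b → P (a * b)) : ∀ a, P a := by
  intro a
  obtain ⟨x, rfl⟩ := RingQuot.mkAlgHom_surjective ℂ (ExtRel q) a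
  induction x using FreeAlgebra.induction with
  | grade0 r => rw [AlgHom.commutes]; exact halg r
  | grade1 i =>
      fin_cases i
      · exact h2
      · exact h0
      · exact hm
  | mul x y hx hy => rw [map_mul]; exact hmul _ _ hx hy
  | add x y hx hy => rw [map_add]; exact hadd _ _ hx hy

lemma Φ10 : ∀ a, Φ q c a 1 0 = 0 := by
  refine extInd q (fun r => ?_) ?_ ?_ ?_ ?_ ?_
  · rw [AlgHom.commutes]; simp [Matrix.algebraMap_matrix_apply]
  · simp [Φ_ev2]
  · simp [Φ_ev0]
  · simp [Φ_evm2]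
  · intro a b ha hb; rw [map_add]; simp [ha, hb]
  · intro a b ha hb
    rw [map_mul]
    simp [Matrix.mul_apply, Fin.sum_univ_two, ha, hb]

lemma Φ11 : ∀ a, Φ q c a 1 1 = a := by
  refine extInd q (fun r => ?_) ?_ ?_ ?_ ?_ ?_
  · rw [AlgHom.commutes]; simp [Matrix.algebraMap_matrix_apply]
  · simp [Φ_ev2]
  · simp [Φ_ev0]
  · simp [Φ_evm2]
  · intro a b ha hb; rw [map_add]; simp [ha, hb]
  · intro a b ha hb
    rw [map_mul]
    simp [Matrix.mul_apply, Fin.sum_univ_two, ha, hb, Φ10]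

lemma Φ00 : ∀ a, Φ q c a 0 0 = σ q a := by
  refine extInd q (fun r => ?_) ?_ ?_ ?_ ?_ ?_
  · rw [AlgHom.commutes, AlgHom.commutes]; simp [Matrix.algebraMap_matrix_apply]
  · simp [Φ_ev2, σ_ev2]
  · simp [Φ_ev0, σ_ev0]
  · simp [Φ_evm2, σ_evm2]
  · intro a b ha hb; rw [map_add, map_add]; simp [ha, hb]
  · intro a b ha hb
    rw [map_mul, map_mul]
    simp [Matrix.mul_apply, Fin.sum_univ_two, ha, hb, Φ10]

lemma d_ev2 : d q c (ev2 q) = dv2 q c := by simp [d, Φ_ev2]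
lemma d_ev0 : d q c (ev0 q) = dv0 q c := by simp [d, Φ_ev0]
lemma d_evm2 : d q c (evm2 q) = dvm2 q c := by simp [d, Φ_evm2]

lemma d_one : d q c 1 = 0 := by
  have : Φ q c 1 = 1 := map_one _
  simp [d, this, Matrix.one_apply]

lemma d_algebraMap (r : ℂ) : d q c (algebraMap ℂ (ExtQ q) r) = 0 := by
  rw [Algebra.algebraMap_eq_smul_one, map_smul, d_one, smul_zero]

lemma d_mul (a b : ExtQ q) :
    d q c (a * b) = σ q a * d q c b + d q c a * b := by
  show Φ q c (a * b) 0 1 = _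
  rw [map_mul]
  simp [Matrix.mul_apply, Fin.sum_univ_two, Φ00, Φ11]
  rfl

lemma σσ : ∀ a, σ q (σ q a) = a := by
  refine extInd q (fun r => ?_) ?_ ?_ ?_ ?_ ?_
  · rw [AlgHom.commutes, AlgHom.commutes]
  · simp [σ_ev2]
  · simp [σ_ev0]
  · simp [σ_evm2]
  · intro a b ha hb; rw [map_add, map_add, ha, hb]
  · intro a b ha hb; rw [map_mul, map_mul, ha, hb]

lemma dσ : ∀ a, d q c (σ q a) = -(σ q (d q c a)) := by
  refine extInd q (fun r => ?_) ?_ ?_ ?_ ?_ ?_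
  · rw [AlgHom.commutes, d_algebraMap, map_zero, neg_zero]
  · rw [σ_ev2, map_neg, d_ev2]
    simp [dv2, σ_ev2, σ_ev0, t1, t2, t3, t5]
  · rw [σ_ev0, map_neg, d_ev0]
    simp [dv0, σ_ev2, σ_evm2, t1, t2, t3, t5]
  · rw [σ_evm2, map_neg, d_evm2]
    simp [dvm2, σ_ev0, σ_evm2, t1, t2, t3, t5]
  · intro a b ha hb
    rw [map_add, map_add, map_add, ha, hb, map_add, t4]
  · intro a b ha hb
    rw [map_mul, d_mul, d_mul, σσ, ha, hb, map_add, map_mul, map_mul, σσ]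
    simp [t1, t2, t4, add_comm]

lemma dd : ∀ a, d q c (d q c a) = 0 := by
  refine extInd q (fun r => ?_) ?_ ?_ ?_ ?_ ?_
  · rw [d_algebraMap, map_zero]
  · rw [d_ev2]
    simp [dv2, d_mul, d_ev2, d_ev0, dv2, dv0, σ_ev2,
      e1', e1, e5, e5', mul_smul_comm, smul_mul_assoc, mul_assoc, t1, t2, t3, t5, t6, t7, t8, smul_smul]
  · rw [d_ev0]
    simp [dv0, d_mul, d_ev2, d_evm2, dv2, dvm2, σ_ev2,
      e1', e1, e5, e5', mul_smul_comm, smul_mul_assoc, mul_assoc, t1, t2, t3, t5, t6, t7, t8,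
      smul_smul]
  · rw [d_evm2]
    simp [dvm2, d_mul, d_ev0, d_evm2, dv0, dvm2, σ_ev0,
      e2', e2, e5, e5', mul_smul_comm, smul_mul_assoc, mul_assoc, t1, t2, t3, t5, t6, t7, t8, smul_smul]
  · intro a b ha hb
    rw [map_add, map_add, ha, hb, add_zero]
  · intro a b ha hb
    rw [d_mul, map_add, d_mul, d_mul, σσ, dσ, ha, hb]
    simp [t1, t6, t7]

end QED

theorem quantum_exterior_differential_exists
    (q c : ℂ) (hq : q ≠ 0) (hc : c ≠ 0) (hroot : ∀ n : ℕ, 0 < n → q ^ n ≠ 1) :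
    ∃ d : ExtQ q →ₗ[ℂ] ExtQ q,
      d 1 = 0 ∧
      d (ev2 q) = -((1 / c : ℂ) • (ev2 q * ev0 q)) ∧
      d (ev0 q) = ((1 + q ^ 2) / (q * c)) • (ev2 q * evm2 q) ∧
      d (evm2 q) = -((1 / c : ℂ) • (ev0 q * evm2 q)) ∧
      (∀ a : ExtQ q, d (ev2 q * a) = d (ev2 q) * a - ev2 q * d a) ∧
      (∀ a : ExtQ q, d (ev0 q * a) = d (ev0 q) * a - ev0 q * d a) ∧
      (∀ a : ExtQ q, d (evm2 q * a) = d (evm2 q) * a - evm2 q * d a) ∧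
      (∀ a : ExtQ q, d (d a) = 0) := by
  refine ⟨QED.d q c, QED.d_one q c, QED.d_ev2 q c, QED.d_ev0 q c, QED.d_evm2 q c,
    fun a => ?_, fun a => ?_, fun a => ?_, QED.dd q c⟩
  · rw [QED.d_mul, QED.σ_ev2, QED.t1, QED.t9, add_comm]
  · rw [QED.d_mul, QED.σ_ev0, QED.t1, QED.t9, add_comm]
  · rw [QED.d_mul, QED.σ_evm2, QED.t1, QED.t9, add_comm]

end
end

section
/- The cohomology of the quantum exterior algebra (⋀_q V_{2π}, d_{∧_q}) is spanned by 1 and v_2∧v_0∧v_{-2}; i.e., H⁰ and H³ are 1-dimensional and H¹ = H² = 0. -/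
/-!
The ordered monomials `1, v₂, v₀, v₋₂, v₂v₀, v₂v₋₂, v₀v₋₂, v₂v₀v₋₂` form a basis of `⋀_q V_{2π}`.
They span because the relations write each generator times a monomial as a combination of
monomials; they are independent because the same structure constants define a representation on
`ℂ⁸` (the matrices satisfy the relations) in which the monomials send `e₀` to the standard basis.

In this basis `d` kills `1` and every monomial of degree at least two (Leibniz rule and the
relations), and sends `v₂, v₀, v₋₂` to nonzero multiples of `v₂v₀, v₂v₋₂, v₀v₋₂`; the middle
coefficient `(1 + q²)/(qc)` is nonzero because `q⁴ ≠ 1`. So a cocycle has no degree-one part, its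
degree-two part is exact, and the coboundaries are exactly the span of the degree-two monomials.
-/

noncomputable section

open FreeAlgebra

theorem mul_mul_of_mul_eq {R : Type*} [Semigroup R] {a b c : R} (h : a * b = c) (w : R) :
    a * (b * w) = c * w := by
  rw [← mul_assoc, h]

namespace ExtQ

variable (q : ℂ)

theorem ev2_mul_ev2 : ev2 q * ev2 q = 0 := by
  simpa [ev2] using RingQuot.mkAlgHom_rel ℂ (ExtRel.r1 (q := q))

theorem evm2_mul_evm2 : evm2 q * evm2 q = 0 := by
  simpa [evm2] using RingQuot.mkAlgHom_rel ℂ (ExtRel.r2 (q := q))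

theorem ev0_mul_ev2 : ev0 q * ev2 q = (-(q ^ 2)⁻¹) • (ev2 q * ev0 q) := by
  have h := RingQuot.mkAlgHom_rel ℂ (ExtRel.r3 (q := q))
  rw [← neg_smul] at h
  simpa only [ev2, ev0, map_mul, map_smul] using h

theorem evm2_mul_ev0 : evm2 q * ev0 q = (-(q ^ 2)⁻¹) • (ev0 q * evm2 q) := by
  have h := RingQuot.mkAlgHom_rel ℂ (ExtRel.r4 (q := q))
  rw [← neg_smul] at h
  simpa only [ev0, evm2, map_mul, map_smul] using h

theorem ev0_mul_ev0 : ev0 q * ev0 q = ((1 - q ^ 4) / q ^ 3) • (ev2 q * evm2 q) := by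
  simpa [ev2, ev0, evm2] using RingQuot.mkAlgHom_rel ℂ (ExtRel.r5 (q := q))

theorem evm2_mul_ev2 : evm2 q * ev2 q = (-1 : ℂ) • (ev2 q * evm2 q) := by
  have h := RingQuot.mkAlgHom_rel ℂ (ExtRel.r6 (q := q))
  rw [← neg_one_smul ℂ] at h
  simpa only [ev2, evm2, map_mul, map_smul] using h

def gen : Fin 3 → ExtQ q := ![ev2 q, ev0 q, evm2 q]

theorem mkAlgHom_ι (j : Fin 3) : RingQuot.mkAlgHom ℂ (ExtRel q) (ι ℂ j) = gen q j := by
  fin_cases j <;> rfl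

def monomial : Fin 8 → ExtQ q :=
  ![1, ev2 q, ev0 q, evm2 q, ev2 q * ev0 q, ev2 q * evm2 q, ev0 q * evm2 q,
    ev2 q * ev0 q * evm2 q]

/-- The matrices of left multiplication by `v₂, v₀, v₋₂` in the monomial basis. -/
def leftMulMatrix : Fin 3 → Matrix (Fin 8) (Fin 8) ℂ :=
  open Matrix in
  ![single 1 0 1 + single 4 2 1 + single 5 3 1 + single 7 6 1,
    single 2 0 1 + single 4 1 (-(q ^ 2)⁻¹) + single 5 2 ((1 - q ^ 4) / q ^ 3) + single 6 3 1 +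
      single 7 5 (-(q ^ 2)⁻¹),
    single 3 0 1 + single 5 1 (-1) + single 6 2 (-(q ^ 2)⁻¹) + single 7 4 (q ^ 2)⁻¹]

theorem gen_mul_monomial (j : Fin 3) (i : Fin 8) :
    gen q j * monomial q i = ∑ k, leftMulMatrix q j k i • monomial q k := by
  fin_cases j <;> fin_cases i <;>
    simp [gen, monomial, leftMulMatrix, Matrix.single_apply, mul_assoc, smul_smul,
      ev2_mul_ev2, evm2_mul_evm2, ev0_mul_ev2, evm2_mul_ev0, ev0_mul_ev0, evm2_mul_ev2,
      mul_mul_of_mul_eq (ev2_mul_ev2 q), mul_mul_of_mul_eq (ev0_mul_ev2 q),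
      mul_mul_of_mul_eq (evm2_mul_ev0 q), mul_mul_of_mul_eq (ev0_mul_ev0 q),
      mul_mul_of_mul_eq (evm2_mul_ev2 q)]

theorem span_range_monomial : Submodule.span ℂ (Set.range (monomial q)) = ⊤ := by
  set S := Submodule.span ℂ (Set.range (monomial q))
  have gen_mul_mem (j : Fin 3) (t : ExtQ q) (ht : t ∈ S) : gen q j * t ∈ S := by
    refine (Submodule.map_span_le (LinearMap.mulLeft ℂ (gen q j)) _ S).2 ?_ ⟨t, ht, rfl⟩
    rintro _ ⟨i, rfl⟩
    rw [LinearMap.mulLeft_apply, gen_mul_monomial]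
    exact S.sum_mem fun k _ => S.smul_mem _ (Submodule.subset_span ⟨k, rfl⟩)
  have mul_mem (a : ExtQ q) : ∀ t ∈ S, a * t ∈ S := by
    obtain ⟨f, rfl⟩ := RingQuot.mkAlgHom_surjective ℂ (ExtRel q) a
    induction f using FreeAlgebra.induction with
    | grade0 r =>
      intro t ht
      rw [AlgHom.commutes, ← Algebra.smul_def]
      exact S.smul_mem r ht
    | grade1 j => rw [mkAlgHom_ι]; exact gen_mul_mem j
    | mul a b ha hb =>
      intro t ht
      rw [map_mul, mul_assoc]
      exact ha _ (hb t ht)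
    | add a b ha hb =>
      intro t ht
      rw [map_add, add_mul]
      exact S.add_mem (ha t ht) (hb t ht)
  refine eq_top_iff.2 fun a _ => ?_
  simpa using mul_mem a 1 (Submodule.subset_span ⟨0, rfl⟩)

theorem exists_sum_monomial (w : ExtQ q) : ∃ u : Fin 8 → ℂ, w = ∑ i, u i • monomial q i := by
  have hw : w ∈ Submodule.span ℂ (Set.range (monomial q)) :=
    span_range_monomial q ▸ Submodule.mem_top
  obtain ⟨u, hu⟩ := (Submodule.mem_span_range_iff_exists_fun ℂ).1 hw
  exact ⟨u, hu.symm⟩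

def leftRegularRep : ExtQ q →ₐ[ℂ] Matrix (Fin 8) (Fin 8) ℂ :=
  RingQuot.liftAlgHom ℂ ⟨FreeAlgebra.lift ℂ (leftMulMatrix q), by
    rintro _ _ ⟨⟩ <;>
      simp [leftMulMatrix, add_mul, mul_add, Matrix.smul_single, Matrix.single_neg, mul_comm,
        add_comm]⟩

theorem leftRegularRep_gen (j : Fin 3) : leftRegularRep q (gen q j) = leftMulMatrix q j := by
  rw [← mkAlgHom_ι, leftRegularRep, RingQuot.liftAlgHom_mkAlgHom_apply, FreeAlgebra.lift_ι_apply]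

theorem leftRegularRep_monomial_col_zero (i : Fin 8) :
    (leftRegularRep q (monomial q i)).col 0 = Pi.single i 1 := by
  have h2 : leftRegularRep q (ev2 q) = leftMulMatrix q 0 := leftRegularRep_gen q 0
  have h0 : leftRegularRep q (ev0 q) = leftMulMatrix q 1 := leftRegularRep_gen q 1
  have hm : leftRegularRep q (evm2 q) = leftMulMatrix q 2 := leftRegularRep_gen q 2
  ext k
  fin_cases i <;> fin_cases k <;> simp [monomial, h2, h0, hm, leftMulMatrix, add_mul, mul_add]

theorem linearIndependent_monomial : LinearIndependent ℂ (monomial q) := by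
  refine Fintype.linearIndependent_iff.2 fun g hg i => ?_
  have hcol (k : Fin 8) : leftRegularRep q (monomial q k) i 0 = (Pi.single k 1 : Fin 8 → ℂ) i :=
    congrFun (leftRegularRep_monomial_col_zero q k) i
  simpa [Matrix.sum_apply, hcol, Pi.single_apply] using
    congrArg (fun w => leftRegularRep q w i 0) hg

section Differential

variable {q} {c : ℂ} {d : ExtQ q →ₗ[ℂ] ExtQ q}

theorem d_ev2_mul_ev0 (hdv2 : d (ev2 q) = (-(1 / c)) • (ev2 q * ev0 q))
    (hdv0 : d (ev0 q) = ((1 + q ^ 2) / (q * c)) • (ev2 q * evm2 q))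
    (hLeib2 : ∀ a : ExtQ q, d (ev2 q * a) = d (ev2 q) * a - ev2 q * d a) :
    d (ev2 q * ev0 q) = 0 := by
  simp [hLeib2, hdv2, hdv0, mul_assoc, ev0_mul_ev0, mul_mul_of_mul_eq (ev2_mul_ev2 q)]

theorem d_ev2_mul_evm2 (hdv2 : d (ev2 q) = (-(1 / c)) • (ev2 q * ev0 q))
    (hdvm : d (evm2 q) = (-(1 / c)) • (ev0 q * evm2 q))
    (hLeib2 : ∀ a : ExtQ q, d (ev2 q * a) = d (ev2 q) * a - ev2 q * d a) :
    d (ev2 q * evm2 q) = 0 := by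
  simp [hLeib2, hdv2, hdvm, mul_assoc]

theorem d_ev0_mul_evm2 (hdv0 : d (ev0 q) = ((1 + q ^ 2) / (q * c)) • (ev2 q * evm2 q))
    (hdvm : d (evm2 q) = (-(1 / c)) • (ev0 q * evm2 q))
    (hLeib0 : ∀ a : ExtQ q, d (ev0 q * a) = d (ev0 q) * a - ev0 q * d a) :
    d (ev0 q * evm2 q) = 0 := by
  simp [hLeib0, hdv0, hdvm, mul_assoc, evm2_mul_evm2, mul_mul_of_mul_eq (ev0_mul_ev0 q)]

theorem d_ev2_mul_ev0_mul_evm2 (hdv2 : d (ev2 q) = (-(1 / c)) • (ev2 q * ev0 q))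
    (hdv0 : d (ev0 q) = ((1 + q ^ 2) / (q * c)) • (ev2 q * evm2 q))
    (hdvm : d (evm2 q) = (-(1 / c)) • (ev0 q * evm2 q))
    (hLeib2 : ∀ a : ExtQ q, d (ev2 q * a) = d (ev2 q) * a - ev2 q * d a)
    (hLeib0 : ∀ a : ExtQ q, d (ev0 q * a) = d (ev0 q) * a - ev0 q * d a) :
    d (ev2 q * ev0 q * evm2 q) = 0 := by
  simp [mul_assoc, hLeib2, d_ev0_mul_evm2 hdv0 hdvm hLeib0, hdv2,
    mul_mul_of_mul_eq (ev0_mul_ev0 q), mul_mul_of_mul_eq (ev2_mul_ev2 q)]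

theorem d_sum_monomial (hd1 : d 1 = 0) (hdv2 : d (ev2 q) = (-(1 / c)) • (ev2 q * ev0 q))
    (hdv0 : d (ev0 q) = ((1 + q ^ 2) / (q * c)) • (ev2 q * evm2 q))
    (hdvm : d (evm2 q) = (-(1 / c)) • (ev0 q * evm2 q))
    (hLeib2 : ∀ a : ExtQ q, d (ev2 q * a) = d (ev2 q) * a - ev2 q * d a)
    (hLeib0 : ∀ a : ExtQ q, d (ev0 q * a) = d (ev0 q) * a - ev0 q * d a) (u : Fin 8 → ℂ) :
    d (∑ i, u i • monomial q i) =
      ∑ i, ![0, 0, 0, 0, -(1 / c) * u 1, (1 + q ^ 2) / (q * c) * u 2, -(1 / c) * u 3, 0] i •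
        monomial q i := by
  simp only [Fin.sum_univ_eight, monomial, Matrix.cons_val, map_add, map_smul, hd1, hdv2, hdv0,
    hdvm, d_ev2_mul_ev0 hdv2 hdv0 hLeib2, d_ev2_mul_evm2 hdv2 hdvm hLeib2,
    d_ev0_mul_evm2 hdv0 hdvm hLeib0, d_ev2_mul_ev0_mul_evm2 hdv2 hdv0 hdvm hLeib2 hLeib0]
  module

end Differential

section Cohomology

variable {q α β γ : ℂ} {d : ExtQ q →ₗ[ℂ] ExtQ q}

theorem exists_eq_add_map_of_map_eq_zero
    (hd : ∀ u : Fin 8 → ℂ, d (∑ i, u i • monomial q i) =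
      ∑ i, ![0, 0, 0, 0, α * u 1, β * u 2, γ * u 3, 0] i • monomial q i)
    (hα : α ≠ 0) (hβ : β ≠ 0) (hγ : γ ≠ 0) {ω : ExtQ q} (hω : d ω = 0) :
    ∃ (a b : ℂ) (μ : ExtQ q), ω = a • 1 + b • (ev2 q * ev0 q * evm2 q) + d μ := by
  obtain ⟨u, rfl⟩ := exists_sum_monomial q ω
  have hcoeff :=
    Fintype.linearIndependent_iff.1 (linearIndependent_monomial q) _ ((hd u).symm.trans hω)
  have hu1 : u 1 = 0 := by simpa [hα] using hcoeff 4
  have hu2 : u 2 = 0 := by simpa [hβ] using hcoeff 5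
  have hu3 : u 3 = 0 := by simpa [hγ] using hcoeff 6
  refine ⟨u 0, u 7, ∑ i, ![0, u 4 / α, u 5 / β, u 6 / γ, 0, 0, 0, 0] i • monomial q i, ?_⟩
  rw [hd]
  simp only [Fin.sum_univ_eight, monomial, Matrix.cons_val, hu1, hu2, hu3, mul_div_cancel₀ _ hα,
    mul_div_cancel₀ _ hβ, mul_div_cancel₀ _ hγ]
  module

theorem eq_zero_of_add_eq_map
    (hd : ∀ u : Fin 8 → ℂ, d (∑ i, u i • monomial q i) =
      ∑ i, ![0, 0, 0, 0, α * u 1, β * u 2, γ * u 3, 0] i • monomial q i)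
    {a b : ℂ} {μ : ExtQ q} (h : a • 1 + b • (ev2 q * ev0 q * evm2 q) = d μ) : a = 0 ∧ b = 0 := by
  obtain ⟨u, rfl⟩ := exists_sum_monomial q μ
  rw [hd] at h
  have hcoeff := Fintype.linearIndependent_iffₛ.1 (linearIndependent_monomial q)
    ![a, 0, 0, 0, 0, 0, 0, b] _ (by rw [← h]; simp [Fin.sum_univ_eight, monomial])
  exact ⟨by simpa using hcoeff 0, by simpa using hcoeff 7⟩

end Cohomology

end ExtQ

open ExtQ

theorem quantum_exterior_cohomology_general
    (q c : ℂ) (hq : q ≠ 0) (hc : c ≠ 0) (hroot : ∀ n : ℕ, 0 < n → q ^ n ≠ 1)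
    (d : ExtQ q →ₗ[ℂ] ExtQ q)
    (hd1 : d 1 = 0)
    (hdv2 : d (ev2 q) = -((1 / c : ℂ) • (ev2 q * ev0 q)))
    (hdv0 : d (ev0 q) = ((1 + q ^ 2) / (q * c)) • (ev2 q * evm2 q))
    (hdvm : d (evm2 q) = -((1 / c : ℂ) • (ev0 q * evm2 q)))
    (hLeib2 : ∀ a : ExtQ q, d (ev2 q * a) = d (ev2 q) * a - ev2 q * d a)
    (hLeib0 : ∀ a : ExtQ q, d (ev0 q * a) = d (ev0 q) * a - ev0 q * d a) :
    (∀ ω : ExtQ q, d ω = 0 →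
      ∃ (a b : ℂ) (μ : ExtQ q),
        ω = a • (1 : ExtQ q) + b • (ev2 q * ev0 q * evm2 q) + d μ) ∧
    (∀ a b : ℂ,
      (∃ μ : ExtQ q, a • (1 : ExtQ q) + b • (ev2 q * ev0 q * evm2 q) = d μ) →
      a = 0 ∧ b = 0) := by
  have hq2 : 1 + q ^ 2 ≠ 0 := fun h => hroot 4 (by norm_num) (by linear_combination (q ^ 2 - 1) * h)
  -- `-` on `RingQuot` is its own `Neg` instance, not reducibly the ring's, so simp lemmas about
  -- negation do not fire on these hypotheses; restate them with negated scalars.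
  have hd := d_sum_monomial hd1 (hdv2.trans (neg_smul (1 / c) _).symm) hdv0
    (hdvm.trans (neg_smul (1 / c) _).symm) hLeib2 hLeib0
  have hα : -(1 / c) ≠ 0 := by simpa using hc
  have hβ : (1 + q ^ 2) / (q * c) ≠ 0 := div_ne_zero hq2 (mul_ne_zero hq hc)
  exact ⟨fun ω hω => exists_eq_add_map_of_map_eq_zero hd hα hβ hα hω,
    fun a b ⟨μ, hμ⟩ => eq_zero_of_add_eq_map hd hμ⟩

/-- The cohomology of (⋀_q V_{2π}, d_{∧_q}) is spanned by 1 and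
v_2∧v_0∧v_{-2}: every closed element is, modulo an exact one, a linear combination
a·1 + b·(v_2∧v_0∧v_{-2}), and no nonzero such combination is exact.  (Hence H⁰ and H³
are 1-dimensional and H¹ = H² = 0.) -/
theorem quantum_exterior_cohomology
    (q c : ℂ) (hq : q ≠ 0) (hc : c ≠ 0) (hroot : ∀ n : ℕ, 0 < n → q ^ n ≠ 1)
    (d : ExtQ q →ₗ[ℂ] ExtQ q)
    (hd1 : d 1 = 0)
    (hdv2 : d (ev2 q) = -((1 / c : ℂ) • (ev2 q * ev0 q)))
    (hdv0 : d (ev0 q) = ((1 + q ^ 2) / (q * c)) • (ev2 q * evm2 q))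
    (hdvm : d (evm2 q) = -((1 / c : ℂ) • (ev0 q * evm2 q)))
    (hLeib2 : ∀ a : ExtQ q, d (ev2 q * a) = d (ev2 q) * a - ev2 q * d a)
    (hLeib0 : ∀ a : ExtQ q, d (ev0 q * a) = d (ev0 q) * a - ev0 q * d a)
    (hLeibm : ∀ a : ExtQ q, d (evm2 q * a) = d (evm2 q) * a - evm2 q * d a) :
    (∀ ω : ExtQ q, d ω = 0 →
      ∃ (a b : ℂ) (μ : ExtQ q),
        ω = a • (1 : ExtQ q) + b • (ev2 q * ev0 q * evm2 q) + d μ) ∧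
    (∀ a b : ℂ,
      (∃ μ : ExtQ q, a • (1 : ExtQ q) + b • (ev2 q * ev0 q * evm2 q) = d μ) →
      a = 0 ∧ b = 0) :=
  quantum_exterior_cohomology_general q c hq hc hroot d hd1 hdv2 hdv0 hdvm hLeib2 hLeib0
end
end

section
/- The cohomology of (Cl_q(sl_2), d_{Cl_q}) vanishes: every ω with d_{Cl_q}(ω) = 0 is of the form d_{Cl_q}(μ) for some μ. In particular, H(Cl_q(sl_2), d_{Cl_q}) = 0. -/
private lemma clq_coeff0 (q c : ℂ) (hq : q ≠ 0) :
    (c * c) * ((1 - q ^ 4) / q ^ 3) + c * (-(q ^ 2)⁻¹ * ((q ^ 2 + 1) / q * c))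
      + c * (-(q ^ 2)⁻¹ * ((q ^ 2 + 1) / q * c))
      + ((q ^ 2 + 1) / q ^ 2 * c) * ((q ^ 2 + 1) / q * c) = 0 := by
  have h2 : ((q:ℂ) ^ 2) ≠ 0 := pow_ne_zero _ hq
  apply mul_left_cancel₀ (pow_ne_zero 3 hq)
  rw [mul_zero]
  field_simp
  ring

private lemma clq_scal (q c : ℂ) (hq : q ≠ 0) (hc : c ≠ 0) :
    (-(1 / (2 * c ^ 2)) : ℂ) * -(1 / (2 * c ^ 2)) * ((c * c) * ((q ^ 2 + 1) / q * c))
      = (1 + q ^ 2) / (4 * c * q) := by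
  have e : (-(1 / (2 * c ^ 2)) : ℂ) * -(1 / (2 * c ^ 2)) * ((c * c) * ((q ^ 2 + 1) / q * c))
      = ((q ^ 2 + 1) * c ^ 3) / (4 * c ^ 4 * q) := by ring
  rw [e, div_eq_div_iff (by simp [hc, hq]) (by simp [hc, hq])]
  ring



/-- The cohomology of (Cl_q(sl_2), d_{Cl_q}) vanishes: every
parity-homogeneous ω with d_{Cl_q}(ω) = 0 is of the form d_{Cl_q}(μ).  For odd ω,
dω = γω + ωγ and exactness means ω = γμ - μγ; for even ω, dω = γω - ωγ and exactness
means ω = γμ + μγ. -/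
theorem clifford_cohomology_vanishes
    (q c : ℂ) (hq : q ≠ 0) (hc : c ≠ 0) (hroot : ∀ n : ℕ, 0 < n → q ^ n ≠ 1)
    {A : Type} [Ring A] [Algebra ℂ A]
    (v2 v0 vm2 : A)
    (h1 : v2 * v2 = 0) (h2 : vm2 * vm2 = 0)
    (h3 : v0 * v2 = -((q ^ 2)⁻¹ • (v2 * v0)))
    (h4 : vm2 * v0 = -((q ^ 2)⁻¹ • (v0 * vm2)))
    (h5 : v0 * v0 = ((1 - q ^ 4) / q ^ 3) • (v2 * vm2) + ((q ^ 2 + 1) / q * c) • (1 : A))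
    (h6 : vm2 * v2 = -(v2 * vm2) + ((q ^ 2 + 1) / q ^ 2 * c) • (1 : A))
    (hlam : (1 + q ^ 2) / (4 * c * q) ≠ 0)
    (γ : A) (hγ : γ = (-(1 / (2 * c ^ 2)) : ℂ) • (c • v0 + v2 * v0 * vm2)) :
    ∀ ω : A,
      (γ * ω + ω * γ = 0 → ∃ μ : A, ω = γ * μ - μ * γ) ∧
      (γ * ω - ω * γ = 0 → ∃ μ : A, ω = γ * μ + μ * γ) := by
  set lam : ℂ := (1 + q ^ 2) / (4 * c * q) with hlamdef
  set α : ℂ := (1 - q ^ 4) / q ^ 3 with hαdef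
  set β : ℂ := (q ^ 2 + 1) / q * c with hβdef
  set δ : ℂ := (q ^ 2 + 1) / q ^ 2 * c with hδdef
  -- central computation: v2 * (v0*v0) * vm2 = β • (v2 * vm2)
  have key : v2 * (v0 * v0) * vm2 = β • (v2 * vm2) := by
    rw [h5, mul_add, add_mul, mul_smul_comm, mul_smul_comm, smul_mul_assoc, smul_mul_assoc]
    have hz : v2 * (v2 * vm2) * vm2 = 0 := by
      rw [← mul_assoc, h1, zero_mul, zero_mul]
    rw [hz, smul_zero, zero_add, mul_one]
  have T2 : v0 * (v2 * v0 * vm2) = (-(q ^ 2)⁻¹ * β) • (v2 * vm2) := by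
    have e1 : v0 * (v2 * v0 * vm2) = (v0 * v2) * v0 * vm2 := by noncomm_ring
    rw [e1, h3]
    have e2 : -((q ^ 2)⁻¹ • (v2 * v0)) * v0 * vm2
        = -((q ^ 2)⁻¹ • (v2 * (v0 * v0) * vm2)) := by
      simp [smul_mul_assoc, mul_assoc]
    rw [e2, key, smul_smul, ← neg_smul, neg_mul]
  have T3 : (v2 * v0 * vm2) * v0 = (-(q ^ 2)⁻¹ * β) • (v2 * vm2) := by
    have e1 : (v2 * v0 * vm2) * v0 = v2 * v0 * (vm2 * v0) := by noncomm_ring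
    rw [e1, h4]
    have e2 : v2 * v0 * -((q ^ 2)⁻¹ • (v0 * vm2))
        = -((q ^ 2)⁻¹ • (v2 * (v0 * v0) * vm2)) := by
      simp [mul_smul_comm, mul_assoc]
    rw [e2, key, smul_smul, ← neg_smul, neg_mul]
  have T4 : (v2 * v0 * vm2) * (v2 * v0 * vm2) = (δ * β) • (v2 * vm2) := by
    have e1 : (v2 * v0 * vm2) * (v2 * v0 * vm2)
        = v2 * v0 * (vm2 * v2) * (v0 * vm2) := by noncomm_ring
    rw [e1, h6]
    have e2 : v2 * v0 * (-(v2 * vm2) + δ • (1 : A)) * (v0 * vm2)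
        = -(v2 * (v0 * v2) * (vm2 * (v0 * vm2)))
          + δ • (v2 * (v0 * v0) * vm2) := by
      simp only [mul_add, add_mul, mul_neg, neg_mul, mul_smul_comm, smul_mul_assoc, mul_one]
      congr 1
      · congr 1; noncomm_ring
      · congr 1; noncomm_ring
    rw [e2, h3, key]
    have e3 : -(v2 * -((q ^ 2)⁻¹ • (v2 * v0)) * (vm2 * (v0 * vm2))) = 0 := by
      simp only [mul_neg, neg_mul, neg_neg, mul_smul_comm, smul_mul_assoc]
      rw [show v2 * (v2 * v0) * (vm2 * (v0 * vm2)) = (v2 * v2) * (v0 * (vm2 * (v0 * vm2))) by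
        noncomm_ring, h1, zero_mul, smul_zero]
    rw [e3, zero_add, smul_smul]
  -- the square of γ
  have hγ2 : γ * γ = lam • (1 : A) := by
    have expand : (c • v0 + v2 * v0 * vm2) * (c • v0 + v2 * v0 * vm2)
        = (c * c) • (v0 * v0) + c • (v0 * (v2 * v0 * vm2))
          + c • ((v2 * v0 * vm2) * v0) + (v2 * v0 * vm2) * (v2 * v0 * vm2) := by
      simp only [mul_add, add_mul, smul_mul_assoc, mul_smul_comm, smul_smul, smul_add]
      abel
    have coeff0 : (c * c) * α + c * (-(q ^ 2)⁻¹ * β) + c * (-(q ^ 2)⁻¹ * β) + δ * β = 0 := by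
      rw [hαdef, hβdef, hδdef]; exact clq_coeff0 q c hq
    have scal : (-(1 / (2 * c ^ 2)) : ℂ) * -(1 / (2 * c ^ 2)) * ((c * c) * β) = lam := by
      rw [hβdef, hlamdef]; exact clq_scal q c hq hc
    have hw : (c • v0 + v2 * v0 * vm2) * (c • v0 + v2 * v0 * vm2)
        = ((c * c) * α + c * (-(q ^ 2)⁻¹ * β) + c * (-(q ^ 2)⁻¹ * β) + δ * β) • (v2 * vm2)
          + ((c * c) * β) • (1 : A) := by
      rw [expand, h5, T2, T3, T4]
      module
    rw [hγ, smul_mul_smul_comm, hw, coeff0, zero_smul, zero_add, smul_smul, scal]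
  -- the homotopy argument
  have h2lam : (2 * lam : ℂ) ≠ 0 := mul_ne_zero two_ne_zero hlam
  intro ω
  have hA : ∀ x : A, γ * (γ * x) = lam • x := fun x => by
    rw [← mul_assoc, hγ2, smul_mul_assoc, one_mul]
  have hsum : ∀ x : A, lam • x + lam • x = (2 * lam) • x := fun x => by module
  constructor
  · intro hω
    have hωγ : ω * γ = -(γ * ω) := by rw [eq_neg_iff_add_eq_zero, add_comm]; exact hω
    refine ⟨((2 * lam)⁻¹ : ℂ) • (γ * ω), ?_⟩
    have hB : (γ * ω) * γ = -(lam • ω) := by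
      rw [mul_assoc, hωγ, mul_neg, hA]
    rw [mul_smul_comm, smul_mul_assoc, hA, hB, ← smul_sub, sub_neg_eq_add, hsum,
      smul_smul, inv_mul_cancel₀ h2lam, one_smul]
  · intro hω
    have hωγ : ω * γ = γ * ω := (sub_eq_zero.mp hω).symm
    refine ⟨((2 * lam)⁻¹ : ℂ) • (γ * ω), ?_⟩
    have hB : (γ * ω) * γ = lam • ω := by
      rw [mul_assoc, hωγ, hA]
    rw [mul_smul_comm, smul_mul_assoc, hA, hB, ← smul_add, hsum,
      smul_smul, inv_mul_cancel₀ h2lam, one_smul]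
end

section
/- In Cl_q(sl_2), the element d_{Cl_q}(x) equals 2β_q(x) for each x in the span of v_2, v_0, v_{-2}; explicitly: γ_q v_2 + v_2 γ_q = -(1/c) v_2 v_0, γ_q v_0 + v_0 γ_q = ((1+q²)/(qc))(v_2 v_{-2} - c), and γ_q v_{-2} + v_{-2} γ_q = -(1/c) v_0 v_{-2}. -/
/-- In Cl_q(sl_2), d_{Cl_q}(x) = 2β_q(x) for x among the generators:
γ_q v_2 + v_2 γ_q = -(1/c) v_2 v_0,
γ_q v_0 + v_0 γ_q = ((1+q²)/(qc))(v_2 v_{-2} - c),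
γ_q v_{-2} + v_{-2} γ_q = -(1/c) v_0 v_{-2}. -/
theorem d_equals_twice_beta
    (q c : ℂ) (hq : q ≠ 0) (hc : c ≠ 0) (hroot : ∀ n : ℕ, 0 < n → q ^ n ≠ 1)
    {A : Type} [Ring A] [Algebra ℂ A]
    (v2 v0 vm2 : A)
    (h1 : v2 * v2 = 0) (h2 : vm2 * vm2 = 0)
    (h3 : v0 * v2 = -((q ^ 2)⁻¹ • (v2 * v0)))
    (h4 : vm2 * v0 = -((q ^ 2)⁻¹ • (v0 * vm2)))
    (h5 : v0 * v0 = ((1 - q ^ 4) / q ^ 3) • (v2 * vm2) + ((q ^ 2 + 1) / q * c) • (1 : A))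
    (h6 : vm2 * v2 = -(v2 * vm2) + ((q ^ 2 + 1) / q ^ 2 * c) • (1 : A))
    (γ : A) (hγ : γ = (-(1 / (2 * c ^ 2)) : ℂ) • (c • v0 + v2 * v0 * vm2)) :
    γ * v2 + v2 * γ = (-(1 / c) : ℂ) • (v2 * v0) ∧
    γ * v0 + v0 * γ = ((1 + q ^ 2) / (q * c)) • (v2 * vm2 - c • (1 : A)) ∧
    γ * vm2 + vm2 * γ = (-(1 / c) : ℂ) • (v0 * vm2) := by
  have h1' : ∀ x : A, v2 * (v2 * x) = 0 := fun x => by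
    rw [← mul_assoc, h1, zero_mul]
  have h2' : ∀ x : A, vm2 * (vm2 * x) = 0 := fun x => by
    rw [← mul_assoc, h2, zero_mul]
  have h3' : ∀ x : A, v0 * (v2 * x) = -((q ^ 2)⁻¹ • (v2 * (v0 * x))) := fun x => by
    rw [← mul_assoc, h3]; simp [smul_mul_assoc, mul_assoc]
  have h4' : ∀ x : A, vm2 * (v0 * x) = -((q ^ 2)⁻¹ • (v0 * (vm2 * x))) := fun x => by
    rw [← mul_assoc, h4]; simp [smul_mul_assoc, mul_assoc]
  have h5' : ∀ x : A, v0 * (v0 * x) =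
      ((1 - q ^ 4) / q ^ 3) • (v2 * (vm2 * x)) + ((q ^ 2 + 1) / q * c) • x := fun x => by
    rw [← mul_assoc, h5]; simp [add_mul, smul_mul_assoc, mul_assoc]
  have h6' : ∀ x : A, vm2 * (v2 * x) =
      -(v2 * (vm2 * x)) + ((q ^ 2 + 1) / q ^ 2 * c) • x := fun x => by
    rw [← mul_assoc, h6]; simp [add_mul, smul_mul_assoc, mul_assoc]
  subst hγ
  refine ⟨?_, ?_, ?_⟩ <;>
  · simp only [smul_add, add_mul, mul_add, smul_mul_assoc, mul_smul_comm, mul_assoc,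
      h1, h2, h3, h4, h5, h6, h1', h2', h3', h4', h5', h6',
      mul_zero, smul_zero, zero_mul, mul_one, mul_neg, neg_mul, smul_neg, neg_neg,
      neg_add_rev]
    match_scalars <;> (field_simp; ring_nf; try ring)
end

section
/- In Cl_q(sl_2), for each x ∈ {v_2, v_0, v_{-2}}, the contraction of γ_q satisfies ι_x(γ_q) = β_q(x) = ½ d_{Cl_q}(x), and moreover ι_x(γ_q) · γ_q* = x where γ_q* = (4qc/(1+q²)) γ_q; e.g., ι_{v_2}(γ_q)·γ_q* = v_2. -/
set_option maxHeartbeats 4000000 in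
/-- In Cl_q(sl_2), for each generator x, the contraction
ι_x(γ_q) = ½(xγ_q + γ_q x) equals β_q(x) = ½ d_{Cl_q}(x), and
ι_x(γ_q) · γ_q* = x, where γ_q* = (4qc/(1+q²)) γ_q. -/
theorem contraction_of_gamma
    (q c : ℂ) (hq : q ≠ 0) (hc : c ≠ 0) (hroot : ∀ n : ℕ, 0 < n → q ^ n ≠ 1)
    {A : Type} [Ring A] [Algebra ℂ A]
    (v2 v0 vm2 : A)
    (h1 : v2 * v2 = 0) (h2 : vm2 * vm2 = 0)
    (h3 : v0 * v2 = -((q ^ 2)⁻¹ • (v2 * v0)))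
    (h4 : vm2 * v0 = -((q ^ 2)⁻¹ • (v0 * vm2)))
    (h5 : v0 * v0 = ((1 - q ^ 4) / q ^ 3) • (v2 * vm2) + ((q ^ 2 + 1) / q * c) • (1 : A))
    (h6 : vm2 * v2 = -(v2 * vm2) + ((q ^ 2 + 1) / q ^ 2 * c) • (1 : A))
    (γ : A) (hγ : γ = (-(1 / (2 * c ^ 2)) : ℂ) • (c • v0 + v2 * v0 * vm2))
    (γs : A) (hγs : γs = ((4 * q * c / (1 + q ^ 2)) : ℂ) • γ) :
    ((2⁻¹ : ℂ) • (v2 * γ + γ * v2) = (-(1 / (2 * c)) : ℂ) • (v2 * v0) ∧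
      (2⁻¹ : ℂ) • (v2 * γ + γ * v2) = (2⁻¹ : ℂ) • (γ * v2 + v2 * γ) ∧
      ((2⁻¹ : ℂ) • (v2 * γ + γ * v2)) * γs = v2) ∧
    ((2⁻¹ : ℂ) • (v0 * γ + γ * v0) = ((1 + q ^ 2) / (2 * q * c)) • (v2 * vm2 - c • (1 : A)) ∧
      (2⁻¹ : ℂ) • (v0 * γ + γ * v0) = (2⁻¹ : ℂ) • (γ * v0 + v0 * γ) ∧
      ((2⁻¹ : ℂ) • (v0 * γ + γ * v0)) * γs = v0) ∧
    ((2⁻¹ : ℂ) • (vm2 * γ + γ * vm2) = (-(1 / (2 * c)) : ℂ) • (v0 * vm2) ∧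
      (2⁻¹ : ℂ) • (vm2 * γ + γ * vm2) = (2⁻¹ : ℂ) • (γ * vm2 + vm2 * γ) ∧
      ((2⁻¹ : ℂ) • (vm2 * γ + γ * vm2)) * γs = vm2) := by
  have hq2 : (1 + q ^ 2 : ℂ) ≠ 0 := by
    intro h
    have hq2' : (q : ℂ) ^ 2 = -1 := by linear_combination h
    exact hroot 4 (by norm_num) (by rw [show (4:ℕ) = 2*2 from rfl, pow_mul, hq2']; ring)
  have hA : q * c ^ 4 * 2 + q ^ 3 * c ^ 4 * 2 ≠ 0 := by
    intro h
    exact mul_ne_zero (mul_ne_zero (mul_ne_zero (by norm_num : (2:ℂ) ≠ 0) hq)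
      (pow_ne_zero 4 hc)) hq2 (by linear_combination h)
  have hB : q ^ 3 * c ^ 4 * 2 + q ^ 5 * c ^ 4 * 2 ≠ 0 := by
    intro h
    exact mul_ne_zero (mul_ne_zero (mul_ne_zero (by norm_num : (2:ℂ) ≠ 0) (pow_ne_zero 3 hq))
      (pow_ne_zero 4 hc)) hq2 (by linear_combination h)
  have hC : q ^ 5 * c ^ 4 * 2 + q ^ 7 * c ^ 4 * 2 ≠ 0 := by
    intro h
    exact mul_ne_zero (mul_ne_zero (mul_ne_zero (by norm_num : (2:ℂ) ≠ 0) (pow_ne_zero 5 hq))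
      (pow_ne_zero 4 hc)) hq2 (by linear_combination h)
  have hD : q ^ 10 * c ^ 8 + q ^ 12 * c ^ 8 * 2 + q ^ 14 * c ^ 8 ≠ 0 := by
    intro h
    exact mul_ne_zero (mul_ne_zero (pow_ne_zero 10 hq) (pow_ne_zero 8 hc))
      (pow_ne_zero 2 hq2) (by linear_combination h)
  subst hγ hγs
  have e1 : ∀ x : A, v2 * (v2 * x) = 0 := fun x => by rw [← mul_assoc, h1, zero_mul]
  have e2 : ∀ x : A, vm2 * (vm2 * x) = 0 := fun x => by rw [← mul_assoc, h2, zero_mul]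
  have e3 : ∀ x : A, v0 * (v2 * x) = -((q ^ 2)⁻¹ • (v2 * (v0 * x))) := fun x => by
    rw [← mul_assoc, h3, neg_mul, smul_mul_assoc, mul_assoc]
  have e4 : ∀ x : A, vm2 * (v0 * x) = -((q ^ 2)⁻¹ • (v0 * (vm2 * x))) := fun x => by
    rw [← mul_assoc, h4, neg_mul, smul_mul_assoc, mul_assoc]
  have e5 : ∀ x : A, v0 * (v0 * x) =
      ((1 - q ^ 4) / q ^ 3) • (v2 * (vm2 * x)) + ((q ^ 2 + 1) / q * c) • x := fun x => by
    rw [← mul_assoc, h5, add_mul, smul_mul_assoc, smul_mul_assoc, mul_assoc, one_mul]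
  have e6 : ∀ x : A, vm2 * (v2 * x) =
      -(v2 * (vm2 * x)) + ((q ^ 2 + 1) / q ^ 2 * c) • x := fun x => by
    rw [← mul_assoc, h6, add_mul, neg_mul, smul_mul_assoc, mul_assoc, one_mul]
  refine ⟨⟨?_, ?_, ?_⟩, ⟨?_, ?_, ?_⟩, ⟨?_, ?_, ?_⟩⟩ <;>
  · simp only [smul_add, sub_eq_add_neg, neg_smul, smul_neg, neg_neg, mul_add, add_mul,
      neg_mul, mul_neg, neg_add, smul_mul_assoc, mul_smul_comm, mul_assoc, mul_one, one_mul,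
      h1, h2, h3, h4, h5, h6, e1, e2, e3, e4, e5, e6, zero_mul, mul_zero, smul_zero,
      zero_add, add_zero, smul_smul]
    try (match_scalars <;> (try ring) <;> (try field_simp) <;> (try ring) <;>
      (try field_simp) <;> (try ring))
end
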